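/- arXiv:1504.03505 — 6 statements merged into one kernel-verified Lean document; each statement's English description precedes it below -/
import Mathlib

section
/- Let $\lambda$ be a PV number of degree $n$ with Vandermonde matrix $V$, and let $\sigma\in\mathbb{R}^n$ be admissible. Define the quasilattice $\mathfrak{L}(\sigma)=\{(V^T\ell)_1 : \ell\in\mathbb{Z}^n,\ |(V^T\ell)_j|<\sigma_j \text{ for } 2\le j\le n\}$. Then the distance between any two distinct points of $\mathfrak{L}(\sigma)$ is at least $2^{1-n}\prod_{j=2}^n\sigma_j^{-1}$; in particular $\mathfrak{L}(\sigma)$ is uniformly discrete. -/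
open Polynomial IntermediateField

/-- The quasilattice `𝔏(σ)` associated to conjugates `λ₁,…,λₙ` and vector `σ`:
all numbers `(Vᵀℓ)₁` with `ℓ ∈ ℤⁿ` and `|(Vᵀℓ)ⱼ| < σⱼ` for `2 ≤ j ≤ n`. -/
def quasiLattice (n : ℕ) [NeZero n] (lams : Fin n → ℂ) (σ : Fin n → ℝ) : Set ℝ :=
  {x | ∃ l : Fin n → ℤ, ((x : ℂ) = ∑ i, (l i : ℂ) * lams 0 ^ (i : ℕ)) ∧
    ∀ j, j ≠ 0 → ‖∑ i, (l i : ℂ) * lams j ^ (i : ℕ)‖ < σ j}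

/-- `σ` is admissible: `σ₁ = 0`, `σⱼ > 0` for `j ≥ 2`, and `σ` takes equal values on
complex-conjugate pairs of roots. -/
def IsAdmissible (n : ℕ) [NeZero n] (lams : Fin n → ℂ) (σ : Fin n → ℝ) : Prop :=
  σ 0 = 0 ∧ (∀ j, j ≠ 0 → 0 < σ j) ∧
  ∀ j k : Fin n, lams j = (starRingEnd ℂ) (lams k) → σ j = σ k

/-- `lam` is a PV number of degree `n` with conjugates `lams` and minimal polynomial `Λ`:
`lam > 1` is a root of the monic irreducible integer polynomial `Λ` of degree `n`
whose complex roots are the `lams j`, and all conjugates other than `lam` have modulus `< 1`. -/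
def IsPV (n : ℕ) [NeZero n] (lam : ℝ) (lams : Fin n → ℂ) (Λ : Polynomial ℤ) : Prop :=
  1 < lam ∧ lams 0 = lam ∧ Λ.Monic ∧ Λ.natDegree = n ∧ Irreducible Λ ∧
  Λ.map (Int.castRingHom ℂ) = ∏ j, (Polynomial.X - Polynomial.C (lams j)) ∧
  ∀ j, j ≠ 0 → ‖lams j‖ < 1

private lemma quasiLattice_key (n : ℕ) [NeZero n] (lams : Fin n → ℂ) (Λ : Polynomial ℤ)
    (hmonic : Λ.Monic) (hdeg : Λ.natDegree = n) (hirr : Irreducible Λ)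
    (hprod : Λ.map (Int.castRingHom ℂ) = ∏ j, (X - C (lams j)))
    (d : Fin n → ℤ)
    (hne : (∑ i, (d i : ℂ) * lams 0 ^ (i : ℕ)) ≠ 0) :
    ∃ D : ℤ, D ≠ 0 ∧ (D : ℂ) = ∏ j, ∑ i, (d i : ℂ) * lams j ^ (i : ℕ) := by
  set Λℚ : ℚ[X] := Λ.map (Int.castRingHom ℚ) with hΛℚ
  have hcomp : (Λℚ).map (algebraMap ℚ ℂ) = Λ.map (Int.castRingHom ℂ) := by
    have h : (algebraMap ℚ ℂ).comp (Int.castRingHom ℚ) = Int.castRingHom ℂ :=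
      RingHom.ext_int _ _
    rw [hΛℚ, Polynomial.map_map, h]
  have hΛℚmonic : Λℚ.Monic := hmonic.map _
  have hΛℚdeg : Λℚ.natDegree = n := by
    rw [hΛℚ, hmonic.natDegree_map, hdeg]
  have hΛℚirr : Irreducible Λℚ :=
    (Polynomial.IsPrimitive.Int.irreducible_iff_irreducible_map_cast hmonic.isPrimitive).mp hirr
  -- each lams j is a root of Λℚ
  have hroot : ∀ j, aeval (lams j) Λℚ = 0 := by
    intro j
    rw [aeval_def, eval₂_eq_eval_map, hcomp, hprod, eval_prod]
    exact Finset.prod_eq_zero (Finset.mem_univ j) (by simp)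
  have hmin : ∀ j, minpoly ℚ (lams j) = Λℚ := fun j =>
    (minpoly.eq_of_irreducible_of_monic hΛℚirr (hroot j) hΛℚmonic).symm
  -- roots of Λℚ in ℂ
  have hroots : (Λℚ.map (algebraMap ℚ ℂ)).roots = Finset.univ.val.map lams := by
    rw [hcomp, hprod]
    have h := roots_multiset_prod_X_sub_C (Finset.univ.val.map lams)
    rw [Multiset.map_map] at h
    rw [Finset.prod_eq_multiset_prod]
    exact h
  -- lams is injective
  have hnodup : ((Λℚ.map (algebraMap ℚ ℂ)).roots).Nodup :=
    nodup_roots (hΛℚirr.separable.map)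
  have hinj : Function.Injective lams := by
    rw [hroots] at hnodup
    intro a b hab
    exact Multiset.inj_on_of_nodup_map hnodup a (by simp) b (by simp) hab
  -- the polynomial P
  set P : ℚ[X] := ∑ i : Fin n, C ((d i : ℚ)) * X ^ (i : ℕ) with hP
  have haevalP : ∀ w : ℂ, aeval w P = ∑ i, (d i : ℂ) * w ^ (i : ℕ) := by
    intro w
    rw [hP, map_sum]
    congr 1; ext i
    simp
  -- the field K
  have hint : IsIntegral ℚ (lams 0) := ⟨Λℚ, hΛℚmonic, hroot 0⟩
  set K := ℚ⟮lams 0⟯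
  haveI : FiniteDimensional ℚ K := IntermediateField.adjoin.finiteDimensional hint
  set α : K := IntermediateField.AdjoinSimple.gen ℚ (lams 0) with hα
  have hαmap : algebraMap K ℂ α = lams 0 := IntermediateField.AdjoinSimple.algebraMap_gen ℚ _
  set z : K := aeval α P with hzdef
  have hzmap : algebraMap K ℂ z = aeval (lams 0) P := by
    rw [hzdef, ← hαmap, aeval_algebraMap_apply]
  have hz0 : z ≠ 0 := by
    intro h
    rw [h, map_zero] at hzmap
    rw [haevalP] at hzmap
    exact hne hzmap.symm
  -- z is integral over ℤ
  have hαint : IsIntegral ℤ α := by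
    rw [← isIntegral_algebraMap_iff (algebraMap K ℂ).injective, hαmap]
    refine ⟨Λ, hmonic, ?_⟩
    have := hroot 0
    rw [aeval_def, eval₂_eq_eval_map, hcomp] at this
    rwa [← eval_map]
  have hzint : IsIntegral ℤ z := by
    have : z = ∑ i : Fin n, (d i : K) * α ^ (i : ℕ) := by
      rw [hzdef, hP, map_sum]
      congr 1; ext i
      simp
    rw [this]
    refine IsIntegral.sum _ fun i _ => IsIntegral.mul ?_ (hαint.pow _)
    exact isIntegral_algebraMap (x := d i)
  -- the norm
  have hNint : IsIntegral ℤ (Algebra.norm ℚ z) := Algebra.isIntegral_norm ℚ hzint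
  obtain ⟨D, hD⟩ := IsIntegrallyClosed.isIntegral_iff.mp hNint
  have hN0 : Algebra.norm ℚ z ≠ 0 := Algebra.norm_ne_zero_iff.mpr hz0
  refine ⟨D, fun h => hN0 (by rw [← hD, h]; simp), ?_⟩
  -- norm = product over embeddings = product over roots
  have hemb : algebraMap ℚ ℂ (Algebra.norm ℚ z) = ∏ σ : K →ₐ[ℚ] ℂ, σ z :=
    Algebra.norm_eq_prod_embeddings ℚ ℂ z
  have haroots : (minpoly ℚ (lams 0)).aroots ℂ = Finset.univ.val.map lams := by
    rw [hmin 0, aroots_def, hroots]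
  set e1 := IntermediateField.algHomAdjoinIntegralEquiv ℚ (K := ℂ) hint
  obtain ⟨e2, he2⟩ : ∃ e2 : Fin n ≃ { y // y ∈ (minpoly ℚ (lams 0)).aroots ℂ },
      ∀ j, (e2 j : ℂ) = lams j := by
    have hmem : ∀ j, lams j ∈ (minpoly ℚ (lams 0)).aroots ℂ := fun j => by
      rw [haroots]
      exact Multiset.mem_map_of_mem lams (Finset.mem_val.mpr (Finset.mem_univ j))
    refine ⟨Equiv.ofBijective (fun j => ⟨lams j, hmem j⟩) ⟨?_, ?_⟩, fun j => rfl⟩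
    · intro a b hab
      exact hinj (congrArg Subtype.val hab)
    · rintro ⟨y, hy⟩
      rw [haroots] at hy
      obtain ⟨j, _, hj⟩ := Multiset.mem_map.mp hy
      exact ⟨j, Subtype.ext hj⟩
  have hprodemb : ∏ σ : K →ₐ[ℚ] ℂ, σ z = ∏ j, ∑ i, (d i : ℂ) * lams j ^ (i : ℕ) := by
    refine Fintype.prod_equiv (e1.trans e2.symm) _ _ fun σ => ?_
    have h1 : (e1 σ : ℂ) = σ α := by
      simp only [e1, IntermediateField.algHomAdjoinIntegralEquiv, Equiv.trans_apply,
        Equiv.subtypeEquiv_apply, Equiv.refl_apply, hα]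
      rw [PowerBasis.liftEquiv'_apply_coe, IntermediateField.adjoin.powerBasis_gen]
    have h2 : lams ((e1.trans e2.symm) σ) = (e1 σ : ℂ) := by
      have h3 := congrArg Subtype.val (e2.apply_symm_apply (e1 σ))
      rw [Equiv.trans_apply, ← he2 (e2.symm (e1 σ))]
      exact h3
    rw [← haevalP, h2, h1, hzdef, aeval_algHom_apply]
    rfl
  have : (D : ℂ) = algebraMap ℚ ℂ (Algebra.norm ℚ z) := by
    rw [← hD]; simp
  rw [this, hemb, hprodemb]


/-- Lemma `QL2` (second part): the distance between distinct points of the quasilattice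
`𝔏(σ)` of a PV number is at least `2^{1-n} ∏_{j≥2} σⱼ⁻¹`. -/
theorem quasiLattice_uniformly_discrete (n : ℕ) [NeZero n] (lam : ℝ) (lams : Fin n → ℂ)
    (Λ : Polynomial ℤ) (hPV : IsPV n lam lams Λ)
    (σ : Fin n → ℝ) (hσ : IsAdmissible n lams σ)
    (x y : ℝ) (hx : x ∈ quasiLattice n lams σ) (hy : y ∈ quasiLattice n lams σ)
    (hxy : x ≠ y) :
    (2:ℝ) ^ ((1:ℤ) - n) * ∏ j ∈ Finset.univ.erase (0 : Fin n), (σ j)⁻¹ ≤ |x - y| := by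
  obtain ⟨hlam1, hlam0, hmonic, hdeg, hirr, hprod, hsmall⟩ := hPV
  obtain ⟨hσ0, hσpos, hσconj⟩ := hσ
  obtain ⟨l, hl, hlb⟩ := hx
  obtain ⟨m, hm, hmb⟩ := hy
  set d : Fin n → ℤ := fun i => l i - m i with hd
  have hf : ∀ j, (∑ i, (d i : ℂ) * lams j ^ (i : ℕ)) =
      (∑ i, (l i : ℂ) * lams j ^ (i : ℕ)) - (∑ i, (m i : ℂ) * lams j ^ (i : ℕ)) := by
    intro j
    rw [← Finset.sum_sub_distrib]
    refine Finset.sum_congr rfl fun i _ => ?_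
    simp only [hd]
    push_cast
    ring
  have hxy0 : (∑ i, (d i : ℂ) * lams 0 ^ (i : ℕ)) = ((x - y : ℝ) : ℂ) := by
    rw [hf 0, ← hl, ← hm]
    push_cast
    ring
  have hne : (∑ i, (d i : ℂ) * lams 0 ^ (i : ℕ)) ≠ 0 := by
    rw [hxy0]
    exact Complex.ofReal_ne_zero.mpr (sub_ne_zero.mpr hxy)
  obtain ⟨D, hD0, hDeq⟩ := quasiLattice_key n lams Λ hmonic hdeg hirr hprod d hne
  set A : Fin n → ℝ := fun j => ‖∑ i, (d i : ℂ) * lams j ^ (i : ℕ)‖ with hA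
  have hA0 : A 0 = |x - y| := by rw [hA]; simp only [hxy0, Complex.norm_real, Real.norm_eq_abs]
  have hAj : ∀ j ∈ Finset.univ.erase (0 : Fin n), A j ≤ 2 * σ j := by
    intro j hj
    have hj0 : j ≠ 0 := Finset.ne_of_mem_erase hj
    have h1 := hlb j hj0
    have h2 := hmb j hj0
    have h3 : A j ≤ ‖∑ i, (l i : ℂ) * lams j ^ (i : ℕ)‖ +
        ‖∑ i, (m i : ℂ) * lams j ^ (i : ℕ)‖ := by
      rw [hA]
      simp only [hf j]
      simpa using
        norm_sub_le (∑ i, (l i : ℂ) * lams j ^ (i : ℕ)) (∑ i, (m i : ℂ) * lams j ^ (i : ℕ))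
    linarith
  have hprodA : |(D : ℝ)| = ∏ j, A j := by
    have h := congrArg (‖·‖) hDeq
    rw [norm_prod] at h
    rw [← h]
    rw [show ((D:ℤ) : ℂ) = (((D:ℤ):ℝ) : ℂ) by push_cast; rfl, Complex.norm_real, Real.norm_eq_abs]
  have hone : (1:ℝ) ≤ ∏ j, A j := by
    rw [← hprodA]
    exact_mod_cast Int.one_le_abs hD0
  set C : ℝ := ∏ j ∈ Finset.univ.erase (0 : Fin n), (2 * σ j) with hC
  have hCpos : 0 < C := by
    refine Finset.prod_pos fun j hj => ?_
    have := hσpos j (Finset.ne_of_mem_erase hj)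
    linarith
  have hmain : 1 ≤ |x - y| * C := by
    calc (1:ℝ) ≤ ∏ j, A j := hone
    _ = A 0 * ∏ j ∈ Finset.univ.erase (0 : Fin n), A j :=
        (Finset.mul_prod_erase Finset.univ A (Finset.mem_univ 0)).symm
    _ ≤ |x - y| * C := by
        rw [hA0, hC]
        refine mul_le_mul_of_nonneg_left ?_ (abs_nonneg _)
        exact Finset.prod_le_prod (fun j _ => norm_nonneg _) hAj
  have hcard : (Finset.univ.erase (0 : Fin n)).card = n - 1 := by
    rw [Finset.card_erase_of_mem (Finset.mem_univ 0), Finset.card_univ, Fintype.card_fin]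
  have hCval : C = 2 ^ (n - 1) * ∏ j ∈ Finset.univ.erase (0 : Fin n), σ j := by
    rw [hC, Finset.prod_mul_distrib, Finset.prod_const, hcard]
  have hn1 : 1 ≤ n := Nat.one_le_iff_ne_zero.mpr (NeZero.ne n)
  have hzpow : (2:ℝ) ^ ((1:ℤ) - n) = ((2:ℝ) ^ (n - 1))⁻¹ := by
    have h : (1:ℤ) - n = -((n - 1 : ℕ) : ℤ) := by
      push_cast [Nat.cast_sub hn1]
      ring
    rw [h, zpow_neg, zpow_natCast]
  have hσprodpos : 0 < ∏ j ∈ Finset.univ.erase (0 : Fin n), σ j :=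
    Finset.prod_pos fun j hj => hσpos j (Finset.ne_of_mem_erase hj)
  have hLHS : (2:ℝ) ^ ((1:ℤ) - n) * ∏ j ∈ Finset.univ.erase (0 : Fin n), (σ j)⁻¹ = C⁻¹ := by
    rw [hzpow, hCval, mul_inv, ← Finset.prod_inv_distrib]
  rw [hLHS, inv_le_iff_one_le_mul₀ hCpos]
  linarith [hmain]
end

section
/- Let $\lambda$ be a PV number of degree $n$ whose minimal polynomial has constant term $c_0$ with $|c_0|=1$, with conjugates $\lambda_1=\lambda,\dots,\lambda_n$. Then for any admissible $\sigma$, $\lambda\,\mathfrak{L}(\sigma)=\mathfrak{L}([0,|\lambda_2|\sigma_2,\dots,|\lambda_n|\sigma_n]^T)$, and consequently $\lambda\,\mathfrak{L}(\sigma)\subseteq\mathfrak{L}(\sigma)$, i.e., $\lambda$ is an inflation symmetry of $\mathfrak{L}(\sigma)$. -/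
open Polynomial

/-- The "companion matrix" action on coefficient vectors: if `l` represents
`P(λ) = ∑ lᵢ λⁱ`, then `fwdVec m c l` represents `λ · P(λ)` modulo the minimal
polynomial with coefficients `c`. -/
def fwdVec (m : ℕ) (c : ℕ → ℤ) (l : Fin (m+1) → ℤ) : Fin (m+1) → ℤ :=
  fun i => (if (i:ℕ) = 0 then 0
      else l ⟨(i:ℕ)-1, (Nat.sub_le _ _).trans_lt i.isLt⟩) - l (Fin.last m) * c i

/-- Inverse of `fwdVec` (valid when `c 0 * c 0 = 1`). -/
def invVec (m : ℕ) (c : ℕ → ℤ) (mm : Fin (m+1) → ℤ) : Fin (m+1) → ℤ :=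
  fun i => if h : (i:ℕ) = m then -c 0 * mm 0
    else mm ⟨(i:ℕ)+1, by omega⟩ - c 0 * mm 0 * c ((i:ℕ)+1)

lemma fwd_inv (m : ℕ) (c : ℕ → ℤ) (hc : c 0 * c 0 = 1) (mm : Fin (m+1) → ℤ) :
    fwdVec m c (invVec m c mm) = mm := by
  have hlast : invVec m c mm (Fin.last m) = -c 0 * mm 0 := by
    simp [invVec]
  funext i
  show (if (i:ℕ) = 0 then 0
      else invVec m c mm ⟨(i:ℕ)-1, (Nat.sub_le _ _).trans_lt i.isLt⟩)
    - invVec m c mm (Fin.last m) * c i = mm i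
  rw [hlast]
  rcases eq_or_ne (i:ℕ) 0 with h0 | h0
  · rw [if_pos h0]
    have hi : i = 0 := Fin.ext h0
    subst hi
    simp only [Fin.val_zero]
    linear_combination mm 0 * hc
  · rw [if_neg h0]
    have hle : (i:ℕ) ≤ m := Nat.lt_succ_iff.mp i.isLt
    have h1 : (i:ℕ) - 1 ≠ m := by omega
    have h2 : ((i:ℕ) - 1) + 1 = (i:ℕ) := by omega
    have hinv : invVec m c mm ⟨(i:ℕ)-1, (Nat.sub_le _ _).trans_lt i.isLt⟩
        = mm i - c 0 * mm 0 * c (i:ℕ) := by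
      show dite _ _ _ = _
      rw [dif_neg h1]
      rw [show (⟨(i:ℕ)-1+1, by omega⟩ : Fin (m+1)) = i from Fin.ext h2, h2]
    rw [hinv]
    ring

lemma fwd_eval (m : ℕ) (c : ℕ → ℤ) (l : Fin (m+1) → ℤ) (z : ℂ)
    (hz : z ^ (m+1) = -∑ i : Fin (m+1), (c i : ℂ) * z ^ (i:ℕ)) :
    ∑ i : Fin (m+1), (fwdVec m c l i : ℂ) * z ^ (i:ℕ)
      = z * ∑ i : Fin (m+1), (l i : ℂ) * z ^ (i:ℕ) := by
  have key : ∀ i : Fin (m+1), (fwdVec m c l i : ℂ) * z ^ (i:ℕ)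
      = (if (i:ℕ) = 0 then (0:ℂ)
          else (l ⟨(i:ℕ)-1, (Nat.sub_le _ _).trans_lt i.isLt⟩ : ℂ)) * z ^ (i:ℕ)
        - (l (Fin.last m) : ℂ) * ((c i : ℂ) * z ^ (i:ℕ)) := by
    intro i
    simp only [fwdVec]
    push_cast [apply_ite (fun x : ℤ => (x:ℂ))]
    ring
  have hz' : (∑ i : Fin (m+1), (c i : ℂ) * z ^ (i:ℕ)) = -z ^ (m+1) := by
    rw [hz, neg_neg]
  rw [Finset.sum_congr rfl (fun i _ => key i), Finset.sum_sub_distrib, ← Finset.mul_sum,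
    hz']
  have h1 : ∑ i : Fin (m+1),
      (if (i:ℕ) = 0 then (0:ℂ)
        else (l ⟨(i:ℕ)-1, (Nat.sub_le _ _).trans_lt i.isLt⟩ : ℂ)) * z ^ (i:ℕ)
      = z * ∑ i : Fin m, (l i.castSucc : ℂ) * z ^ (i:ℕ) := by
    rw [Fin.sum_univ_succ, if_pos (show ((0 : Fin (m+1)) : ℕ) = 0 from rfl), zero_mul,
      zero_add, Finset.mul_sum]
    apply Finset.sum_congr rfl
    intro i _
    have hv : ((i.succ : Fin (m+1)) : ℕ) = (i:ℕ) + 1 := rfl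
    rw [if_neg (by omega)]
    rw [show (⟨((i.succ : Fin (m+1)):ℕ) - 1, (Nat.sub_le _ _).trans_lt (i.succ).isLt⟩
        : Fin (m+1)) = i.castSucc from Fin.ext (by simp [hv])]
    rw [hv, pow_succ]
    ring
  rw [h1]
  rw [Fin.sum_univ_castSucc (f := fun i : Fin (m+1) => (l i : ℂ) * z ^ (i:ℕ))]
  simp only [Fin.coe_castSucc, Fin.val_last]
  ring

/-- Lemma `QL5` of the paper: if the constant term of the minimal polynomial of the PV
number `λ` has `|c₀| = 1`, then `λ 𝔏(σ) = 𝔏([0, |λ₂|σ₂, …, |λₙ|σₙ])`, and in particular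
`λ 𝔏(σ) ⊆ 𝔏(σ)`, i.e. `λ` is an inflation symmetry of `𝔏(σ)`. -/
theorem quasiLattice_inflation (n : ℕ) [NeZero n] (lam : ℝ) (lams : Fin n → ℂ)
    (Λ : Polynomial ℤ) (hPV : IsPV n lam lams Λ)
    (hc0 : Λ.coeff 0 = 1 ∨ Λ.coeff 0 = -1)
    (σ : Fin n → ℝ) (hσ : IsAdmissible n lams σ) :
    (fun x => lam * x) '' quasiLattice n lams σ =
      quasiLattice n lams (fun j => ‖lams j‖ * σ j) ∧
    (fun x => lam * x) '' quasiLattice n lams σ ⊆ quasiLattice n lams σ := by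
  obtain ⟨m, rfl⟩ : ∃ m, n = m + 1 := ⟨n - 1, by have := NeZero.ne n; omega⟩
  obtain ⟨hlam1, hl0, hmon, hdeg, hirr, hprod, hsmall⟩ := hPV
  have hc2 : Λ.coeff 0 * Λ.coeff 0 = 1 := by rcases hc0 with h | h <;> rw [h] <;> norm_num
  have hroot : ∀ j, Polynomial.eval (lams j) (Λ.map (Int.castRingHom ℂ)) = 0 := by
    intro j
    rw [hprod, Polynomial.eval_prod]
    exact Finset.prod_eq_zero (Finset.mem_univ j) (by simp)
  have hdeg' : (Λ.map (Int.castRingHom ℂ)).natDegree = m + 1 := by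
    rw [hmon.natDegree_map]; exact hdeg
  have hlc : Λ.coeff (m+1) = 1 := by
    have h := hmon
    rwa [Polynomial.Monic, Polynomial.leadingCoeff, hdeg] at h
  have hzj : ∀ j, lams j ^ (m+1)
      = -∑ i : Fin (m+1), (Λ.coeff i : ℂ) * lams j ^ (i:ℕ) := by
    intro j
    have h := hroot j
    rw [Polynomial.eval_eq_sum_range, hdeg'] at h
    simp only [Polynomial.coeff_map, eq_intCast] at h
    rw [Finset.sum_range_succ, hlc] at h
    rw [show (∑ i : Fin (m+1), (Λ.coeff i : ℂ) * lams j ^ (i:ℕ))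
        = ∑ i ∈ Finset.range (m+1), (Λ.coeff i : ℂ) * lams j ^ i from
      Fin.sum_univ_eq_sum_range (fun i => (Λ.coeff i : ℂ) * lams j ^ i) (m+1)]
    push_cast at h ⊢
    linear_combination h
  have hc0' : (Λ.coeff 0 : ℂ) ≠ 0 := by
    rcases hc0 with h | h <;> rw [h] <;> norm_num
  have hne : ∀ j, lams j ≠ 0 := by
    intro j hj
    have h := hroot j
    rw [hj, ← Polynomial.coeff_zero_eq_eval_zero, Polynomial.coeff_map] at h
    exact hc0' (by simpa using h)
  have hlamne : (lam : ℂ) ≠ 0 := by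
    simp only [ne_eq, Complex.ofReal_eq_zero]
    intro h; rw [h] at hlam1; linarith
  have hlamne' : lam ≠ 0 := by intro h; rw [h] at hlam1; linarith
  have heq : (fun x => lam * x) '' quasiLattice (m+1) lams σ =
      quasiLattice (m+1) lams (fun j => ‖lams j‖ * σ j) := by
    ext y
    constructor
    · rintro ⟨x, ⟨l, hx, hb⟩, rfl⟩
      refine ⟨fwdVec m Λ.coeff l, ?_, ?_⟩
      · push_cast
        rw [fwd_eval m Λ.coeff l (lams 0) (hzj 0), ← hx, hl0]
      · intro j hj
        rw [fwd_eval m Λ.coeff l (lams j) (hzj j), norm_mul]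
        exact mul_lt_mul_of_pos_left (hb j hj) (norm_pos_iff.mpr (hne j))
    · rintro ⟨mm, hy, hb⟩
      set l := invVec m Λ.coeff mm with hl
      have hfwd : fwdVec m Λ.coeff l = mm := fwd_inv m Λ.coeff hc2 mm
      have hkey : ∀ j, (∑ i, (mm i : ℂ) * lams j ^ (i:ℕ))
          = lams j * ∑ i, (l i : ℂ) * lams j ^ (i:ℕ) := by
        intro j
        rw [← hfwd]
        exact fwd_eval m Λ.coeff l (lams j) (hzj j)
      refine ⟨y / lam, ⟨l, ?_, ?_⟩, by simp; field_simp⟩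
      · have h0 := hkey 0
        rw [← hy] at h0
        push_cast
        rw [h0, hl0]
        exact mul_div_cancel_left₀ _ hlamne
      · intro j hj
        have h := hb j hj
        rw [hkey j, norm_mul] at h
        exact (mul_lt_mul_iff_right₀ (norm_pos_iff.mpr (hne j))).mp h
  refine ⟨heq, ?_⟩
  rw [heq]
  rintro y ⟨l, hy, hb⟩
  refine ⟨l, hy, fun j hj => (hb j hj).trans ?_⟩
  exact mul_lt_of_lt_one_left (hσ.2.1 j hj) (hsmall j hj)
end

section
/- Let $\lambda$ be a PV number of degree $n$ and $\sigma$ admissible. Then there exists $M>0$ such that every open interval in $\mathbb{R}$ of length $M$ contains a point of the quasilattice $\mathfrak{L}(\sigma)$; i.e., $\mathfrak{L}(\sigma)$ is relatively dense in $\mathbb{R}$. -/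
open Polynomial

lemma greedy (lam : ℝ) (hlam : 1 < lam) (K : ℕ) :
    ∀ N : ℕ, ∀ t : ℝ, |t| ≤ lam ^ (N+1) / 2 →
    ∃ d : ℕ → ℤ, (∀ k, |(d k : ℝ)| ≤ lam) ∧ (∀ k, d k ≠ 0 → K ≤ k ∧ k ≤ N) ∧
      |t - ∑ k ∈ Finset.range (N+1), (d k : ℝ) * lam ^ k| ≤ lam ^ K / 2 := by
  have hl0 : (0:ℝ) < lam := by linarith
  intro N
  induction N with
  | zero =>
    intro t ht
    rcases Nat.eq_zero_or_pos K with hK | hK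
    · subst hK
      refine ⟨fun k => if k = 0 then round t else 0, ?_, ?_, ?_⟩
      · intro k
        rcases eq_or_ne k 0 with h | h
        · subst h; show |((round t : ℤ) : ℝ)| ≤ lam
          have h1 : |(round t : ℝ) - t| ≤ 1/2 := by
            have := abs_sub_round t; rwa [abs_sub_comm] at this
          have h2 : |(round t : ℝ)| ≤ |t| + 1/2 := by
            have := abs_sub_abs_le_abs_sub ((round t : ℝ)) t
            linarith
          have h3 : |(round t : ℝ)| ≤ lam/2 + 1/2 := by
            norm_num at ht; linarith
          linarith
        · simp only []; rw [if_neg h]; simp; linarith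
      · intro k hk; by_cases h : k = 0 <;> simp [h] at hk ⊢
      · rw [Finset.sum_range_one]
        show |t - ((round t : ℤ) : ℝ) * lam ^ 0| ≤ lam ^ 0 / 2
        rw [pow_zero, mul_one]
        have := abs_sub_round t
        calc |t - (round t : ℝ)| ≤ 1/2 := this
        _ ≤ lam ^ 0 / 2 := by norm_num
    · refine ⟨0, by intro k; simp; linarith, by simp, ?_⟩
      simp only [Pi.zero_apply, Int.cast_zero, zero_mul, Finset.sum_const_zero, sub_zero]
      calc |t| ≤ lam ^ 1 / 2 := ht
      _ ≤ lam ^ K / 2 := by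
        gcongr
        · linarith
        · exact hK
  | succ N ih =>
    intro t ht
    by_cases hK : K ≤ N + 1
    · set m : ℤ := round (t / lam ^ (N+1)) with hm
      have hdiv : |t / lam ^ (N+1)| ≤ lam / 2 := by
        rw [abs_div, abs_of_pos (pow_pos hl0 _), div_le_div_iff₀ (pow_pos hl0 _) two_pos]
        calc |t| * 2 ≤ lam ^ (N+2) := by linarith
        _ = lam * lam ^ (N+1) := by ring
      have hmabs : |(m:ℝ)| ≤ lam := by
        have h1 : |(m:ℝ) - t / lam ^ (N+1)| ≤ 1/2 := by
          have := abs_sub_round (t / lam ^ (N+1)); rw [abs_sub_comm] at this; exact this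
        have := abs_sub_abs_le_abs_sub ((m:ℝ)) (t / lam ^ (N+1))
        nlinarith [abs_nonneg (t / lam ^ (N+1))]
      set t' : ℝ := t - (m:ℝ) * lam ^ (N+1) with ht'
      have ht'b : |t'| ≤ lam ^ (N+1) / 2 := by
        have h1 : |t / lam ^ (N+1) - (m:ℝ)| ≤ 1/2 := abs_sub_round _
        have hp : (0:ℝ) < lam ^ (N+1) := pow_pos hl0 _
        have heq : t' = (t / lam ^ (N+1) - (m:ℝ)) * lam ^ (N+1) := by
          rw [ht']; field_simp
        rw [heq, abs_mul, abs_of_pos hp]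
        calc |t / lam ^ (N+1) - (m:ℝ)| * lam ^ (N+1) ≤ 1/2 * lam ^ (N+1) := by
              apply mul_le_mul_of_nonneg_right h1 hp.le
        _ = lam ^ (N+1) / 2 := by ring
      obtain ⟨d, hd1, hd2, hd3⟩ := ih t' ht'b
      refine ⟨Function.update d (N+1) m, ?_, ?_, ?_⟩
      · intro k
        by_cases h : k = N + 1
        · subst h; simp only [Function.update_self]; exact hmabs
        · rw [Function.update_of_ne h]; exact hd1 k
      · intro k hk
        by_cases h : k = N + 1
        · omega
        · rw [Function.update_of_ne h] at hk
          have := hd2 k hk; omega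
      · rw [Finset.sum_range_succ, Function.update_self]
        have hsum : ∑ k ∈ Finset.range (N+1), ((Function.update d (N+1) m k : ℤ) : ℝ) * lam ^ k
            = ∑ k ∈ Finset.range (N+1), (d k : ℝ) * lam ^ k := by
          apply Finset.sum_congr rfl
          intro k hk
          rw [Function.update_of_ne (by simp at hk; omega)]
        rw [hsum]
        have heq2 : t - (∑ k ∈ Finset.range (N+1), (d k : ℝ) * lam ^ k + (m:ℝ) * lam ^ (N+1))
            = t' - ∑ k ∈ Finset.range (N+1), (d k : ℝ) * lam ^ k := by rw [ht']; ring
        rw [heq2]; exact hd3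
    · refine ⟨0, by intro k; simp; linarith, by simp, ?_⟩
      simp only [Pi.zero_apply, Int.cast_zero, zero_mul, Finset.sum_const_zero, sub_zero]
      calc |t| ≤ lam ^ (N+2) / 2 := ht
      _ ≤ lam ^ K / 2 := by
        have : lam ^ (N+2) ≤ lam ^ K := pow_le_pow_right₀ hlam.le (by omega)
        linarith


lemma polykey (n : ℕ) [NeZero n] (lams : Fin n → ℂ) (Λ : Polynomial ℤ)
    (hmon : Λ.Monic) (hdeg : Λ.natDegree = n)
    (hroots : Λ.map (Int.castRingHom ℂ) = ∏ j, (X - C (lams j)))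
    (k : ℕ) (j : Fin n) :
    lams j ^ k = ∑ i : Fin n, (((X ^ k %ₘ Λ).coeff (i:ℕ) : ℂ)) * lams j ^ (i:ℕ) := by
  have hn : 0 < n := Nat.pos_of_ne_zero (NeZero.ne n)
  have hΛ0 : (Λ.map (Int.castRingHom ℂ)).eval (lams j) = 0 := by
    rw [hroots, eval_prod]
    exact Finset.prod_eq_zero (Finset.mem_univ j) (by simp)
  set R := X ^ k %ₘ Λ with hR
  have hdiv : R + Λ * (X ^ k /ₘ Λ) = X ^ k := modByMonic_add_div _ Λ
  have h1 : (lams j) ^ k = ((R.map (Int.castRingHom ℂ))).eval (lams j) := by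
    have h := congrArg (fun p => (Polynomial.map (Int.castRingHom ℂ) p).eval (lams j)) hdiv
    simp only [Polynomial.map_add, Polynomial.map_mul, eval_add, eval_mul, hΛ0, zero_mul,
      add_zero, Polynomial.map_pow, Polynomial.map_X, eval_pow, eval_X] at h
    exact h.symm
  have hRd : R.natDegree < n := by
    rcases eq_or_ne R 0 with h0 | h0
    · rw [h0]; simpa using hn
    · rw [natDegree_lt_iff_degree_lt h0]
      have := degree_modByMonic_lt (X ^ k) hmon
      rwa [degree_eq_natDegree hmon.ne_zero, hdeg] at this
  have hRd' : (R.map (Int.castRingHom ℂ)).natDegree < n :=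
    lt_of_le_of_lt natDegree_map_le hRd
  rw [h1, eval_eq_sum_range' hRd' (lams j), Fin.sum_univ_eq_sum_range
    (fun i => ((R.coeff i : ℂ)) * lams j ^ i) n]
  exact Finset.sum_congr rfl fun i _ => by rw [coeff_map, eq_intCast]

/-- Lemma `QL4` of the paper: the quasilattice `𝔏(σ)` of a PV number is relatively
dense: there exists `M > 0` such that every open interval of length `M` contains a
point of `𝔏(σ)`. -/
theorem quasiLattice_relatively_dense (n : ℕ) [NeZero n] (lam : ℝ) (lams : Fin n → ℂ)
    (Λ : Polynomial ℤ) (hPV : IsPV n lam lams Λ)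
    (σ : Fin n → ℝ) (hσ : IsAdmissible n lams σ) :
    ∃ M > (0:ℝ), ∀ a : ℝ, ∃ x ∈ quasiLattice n lams σ, x ∈ Set.Ioo a (a + M) := by
  obtain ⟨hlam, hl0, hmon, hdeg, hirr, hroots, hsmall⟩ := hPV
  obtain ⟨hσ0, hσpos, hσconj⟩ := hσ
  have hl0' : (0:ℝ) < lam := by linarith
  -- choose K
  have hKex : ∃ K : ℕ, ∀ j : Fin n, j ≠ 0 →
      lam * (‖lams j‖) ^ K < σ j * (1 - ‖lams j‖) := by
    have hev : ∀ᶠ K in Filter.atTop, ∀ j : Fin n, j ≠ 0 →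
        lam * (‖lams j‖) ^ K < σ j * (1 - ‖lams j‖) := by
      rw [Filter.eventually_all]
      intro j
      by_cases hj : j = 0
      · filter_upwards with K hne; exact absurd hj hne
      · have h0 : 0 < σ j * (1 - ‖lams j‖) :=
          mul_pos (hσpos j hj) (by linarith [hsmall j hj])
        have ht := (tendsto_pow_atTop_nhds_zero_of_lt_one (norm_nonneg (lams j))
          (hsmall j hj)).const_mul lam
        rw [mul_zero] at ht
        filter_upwards [ht.eventually_lt_const h0] with K hK _
        exact hK
    exact hev.exists
  obtain ⟨K, hK⟩ := hKex
  refine ⟨2 * lam ^ K, by positivity, fun a => ?_⟩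
  set t : ℝ := a + lam ^ K with htdef
  obtain ⟨N, hN⟩ := pow_unbounded_of_one_lt (2 * |t|) hlam
  have htb : |t| ≤ lam ^ (N+1) / 2 := by
    have h2 : lam ^ N ≤ lam ^ (N+1) := pow_le_pow_right₀ hlam.le (by omega)
    linarith
  obtain ⟨d, hd1, hd2, hd3⟩ := greedy lam hlam K N t htb
  set x : ℝ := ∑ k ∈ Finset.range (N+1), (d k : ℝ) * lam ^ k with hxdef
  set l : Fin n → ℤ := fun i => ∑ k ∈ Finset.range (N+1), d k * (X ^ k %ₘ Λ).coeff (i:ℕ)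
    with hldef
  have key : ∀ j : Fin n, (∑ i : Fin n, (l i : ℂ) * lams j ^ (i:ℕ))
      = ∑ k ∈ Finset.range (N+1), (d k : ℂ) * lams j ^ k := by
    intro j
    have step : ∀ i : Fin n, ((l i : ℤ) : ℂ) * lams j ^ (i:ℕ)
        = ∑ k ∈ Finset.range (N+1),
            (d k : ℂ) * (((X ^ k %ₘ Λ).coeff (i:ℕ) : ℂ) * lams j ^ (i:ℕ)) := by
      intro i
      rw [hldef]
      push_cast
      rw [Finset.sum_mul]
      exact Finset.sum_congr rfl fun k _ => by ring
    rw [Finset.sum_congr rfl fun i _ => step i, Finset.sum_comm]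
    refine Finset.sum_congr rfl fun k _ => ?_
    rw [← Finset.mul_sum, ← polykey n lams Λ hmon hdeg hroots k j]
  refine ⟨x, ⟨l, ?_, ?_⟩, ?_⟩
  · rw [key 0, hl0, hxdef]
    push_cast
    rfl
  · intro j hj
    rw [key j]
    set r : ℝ := ‖lams j‖ with hrdef
    have hr0 : 0 ≤ r := norm_nonneg _
    have hr1 : r < 1 := hsmall j hj
    have h1r : (0:ℝ) < 1 - r := by linarith
    have hb1 : ‖∑ k ∈ Finset.range (N+1), (d k : ℂ) * lams j ^ k‖
        ≤ ∑ k ∈ Finset.range (N+1), |(d k : ℝ)| * r ^ k := by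
      refine le_trans (norm_sum_le _ _) (le_of_eq ?_)
      refine Finset.sum_congr rfl fun k _ => ?_
      rw [norm_mul, norm_pow]
      norm_num
      exact Or.inl rfl
    have hb2 : ∑ k ∈ Finset.range (N+1), |(d k : ℝ)| * r ^ k
        = ∑ k ∈ Finset.Ico K (N+1), |(d k : ℝ)| * r ^ k := by
      symm
      refine Finset.sum_subset ?_ ?_
      · intro k hk; simp only [Finset.mem_Ico] at hk; simp [hk.2]
      · intro k hk hk2
        simp only [Finset.mem_range] at hk
        simp only [Finset.mem_Ico] at hk2
        have : d k = 0 := by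
          by_contra h
          have := hd2 k h
          omega
        simp [this]
    have hb3 : ∑ k ∈ Finset.Ico K (N+1), |(d k : ℝ)| * r ^ k
        ≤ ∑ k ∈ Finset.Ico K (N+1), lam * r ^ k := by
      refine Finset.sum_le_sum fun k _ => ?_
      exact mul_le_mul_of_nonneg_right (hd1 k) (pow_nonneg hr0 k)
    have hgeom : ∑ m ∈ Finset.range (N+1-K), r ^ m ≤ 1 / (1 - r) := by
      rw [geom_sum_eq (by linarith : r ≠ 1)]
      rw [show (r ^ (N+1-K) - 1)/(r - 1) = (1 - r ^ (N+1-K))/(1 - r) by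
        rw [← neg_div_neg_eq, neg_sub, neg_sub]]
      have hpow : 0 ≤ r ^ (N+1-K) := pow_nonneg hr0 _
      gcongr
      linarith
    have hb4 : ∑ k ∈ Finset.Ico K (N+1), lam * r ^ k ≤ lam * r ^ K * (1 / (1 - r)) := by
      rw [Finset.sum_Ico_eq_sum_range]
      have : ∀ m, lam * r ^ (K + m) = (lam * r ^ K) * r ^ m := by
        intro m; rw [pow_add]; ring
      rw [Finset.sum_congr rfl fun m _ => this m, ← Finset.mul_sum]
      exact mul_le_mul_of_nonneg_left hgeom (by positivity)
    have hfin : lam * r ^ K * (1 / (1 - r)) < σ j := by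
      rw [mul_one_div, div_lt_iff₀ h1r]
      exact hK j hj
    calc ‖∑ k ∈ Finset.range (N+1), (d k : ℂ) * lams j ^ k‖
        ≤ ∑ k ∈ Finset.range (N+1), |(d k : ℝ)| * r ^ k := hb1
      _ = ∑ k ∈ Finset.Ico K (N+1), |(d k : ℝ)| * r ^ k := hb2
      _ ≤ ∑ k ∈ Finset.Ico K (N+1), lam * r ^ k := hb3
      _ ≤ lam * r ^ K * (1 / (1 - r)) := hb4
      _ < σ j := hfin
  · have hp : (0:ℝ) < lam ^ K := pow_pos hl0' K
    have h1 := abs_le.mp hd3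
    constructor
    · have : t - x ≤ lam ^ K / 2 := h1.2
      simp only [htdef] at this ⊢
      linarith
    · have : -(lam ^ K / 2) ≤ t - x := h1.1
      simp only [htdef] at this ⊢
      linarith
end

section
/- Let $\lambda$ be a PV number of degree $n$ and $\sigma$ admissible. Then there exists a finite set $F\subset\mathbb{R}$ such that $\mathfrak{L}(\sigma)+\mathfrak{L}(\sigma)\subseteq\mathfrak{L}(\sigma)+F$; i.e., $\mathfrak{L}(\sigma)$ is a Meyer set. -/
open Polynomial

/-- Truncated greedy base-`lam` expansion: any `0 ≤ r < lam^(K+N)` is approximated within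
`lam^K` by an integer polynomial supported on powers `≥ K` with digits bounded by `lam`. -/
lemma ql_expand {n : ℕ} [NeZero n] {lam : ℝ} (hlam : 1 < lam) (lams : Fin n → ℂ) (K : ℕ) :
    ∀ N : ℕ, ∀ r : ℝ, 0 ≤ r → r < lam ^ (K + N) →
    ∃ P : Polynomial ℤ,
      0 ≤ r - (P.map (Int.castRingHom ℝ)).eval lam ∧
      r - (P.map (Int.castRingHom ℝ)).eval lam < lam ^ K ∧
      ∀ j : Fin n, ‖(P.map (Int.castRingHom ℂ)).eval (lams j)‖ ≤
        lam * ∑ k ∈ Finset.range N, ‖lams j‖ ^ (K + k) := by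
  intro N
  induction N with
  | zero =>
    intro r hr0 hrU
    refine ⟨0, by simpa using hr0, by simpa using hrU, fun j => by simp⟩
  | succ N ih =>
    intro r hr0 hrU
    have hpow : (0:ℝ) < lam ^ (K + N) := pow_pos (lt_trans one_pos hlam) _
    set a : ℤ := ⌊r / lam ^ (K + N)⌋ with ha
    have ha0 : 0 ≤ a := Int.floor_nonneg.mpr (div_nonneg hr0 hpow.le)
    have haR : (a:ℝ) ≤ r / lam ^ (K + N) := Int.floor_le _
    have haU : r / lam ^ (K + N) < lam := by
      rw [div_lt_iff₀ hpow]
      calc r < lam ^ (K + (N+1)) := hrU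
      _ = lam * lam ^ (K + N) := by ring
    have haLam : (a:ℝ) < lam := lt_of_le_of_lt haR haU
    set r' : ℝ := r - a * lam ^ (K + N) with hr'
    have hr'0 : 0 ≤ r' := by
      have := (le_div_iff₀ hpow).mp haR
      simpa [hr'] using sub_nonneg.mpr this
    have hr'U : r' < lam ^ (K + N) := by
      have h1 : r / lam ^ (K + N) < a + 1 := Int.lt_floor_add_one _
      have := (div_lt_iff₀ hpow).mp h1
      nlinarith
    obtain ⟨P', h1, h2, h3⟩ := ih r' hr'0 hr'U
    refine ⟨P' + Polynomial.C a * Polynomial.X ^ (K + N), ?_, ?_, ?_⟩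
    · have : ((P' + Polynomial.C a * Polynomial.X ^ (K + N)).map (Int.castRingHom ℝ)).eval lam
        = (P'.map (Int.castRingHom ℝ)).eval lam + a * lam ^ (K + N) := by
        simp
      rw [this]; linarith
    · have : ((P' + Polynomial.C a * Polynomial.X ^ (K + N)).map (Int.castRingHom ℝ)).eval lam
        = (P'.map (Int.castRingHom ℝ)).eval lam + a * lam ^ (K + N) := by
        simp
      rw [this]; linarith
    · intro j
      have heval : ((P' + Polynomial.C a * Polynomial.X ^ (K + N)).map (Int.castRingHom ℂ)).eval (lams j)
        = (P'.map (Int.castRingHom ℂ)).eval (lams j) + (a:ℂ) * lams j ^ (K + N) := by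
        simp
      rw [heval]
      calc ‖(P'.map (Int.castRingHom ℂ)).eval (lams j) + (a:ℂ) * lams j ^ (K + N)‖
          ≤ ‖(P'.map (Int.castRingHom ℂ)).eval (lams j)‖
            + ‖(a:ℂ) * lams j ^ (K + N)‖ := norm_add_le _ _
        _ ≤ lam * ∑ k ∈ Finset.range N, ‖lams j‖ ^ (K + k)
            + lam * ‖lams j‖ ^ (K + N) := by
            refine add_le_add (h3 j) ?_
            rw [norm_mul, norm_pow, Complex.norm_intCast]
            have h1 : |(a:ℝ)| ≤ lam := by
              rw [abs_of_nonneg (by exact_mod_cast ha0)]; exact haLam.le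
            exact mul_le_mul_of_nonneg_right h1 (pow_nonneg (norm_nonneg _) _)
        _ = lam * ∑ k ∈ Finset.range (N+1), ‖lams j‖ ^ (K + k) := by
            rw [Finset.sum_range_succ]; ring

/-- Reduction mod the monic minimal polynomial: every integer polynomial agrees at all
roots with one of degree `< n`, given by a vector in `ℤⁿ`. -/
lemma ql_reduce {n : ℕ} [NeZero n] (lams : Fin n → ℂ) {Λ : Polynomial ℤ}
    (hm : Λ.Monic) (hd : Λ.natDegree = n)
    (hr : Λ.map (Int.castRingHom ℂ) = ∏ j, (Polynomial.X - Polynomial.C (lams j)))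
    (P : Polynomial ℤ) :
    ∃ l : Fin n → ℤ, ∀ j,
      ∑ i, (l i : ℂ) * lams j ^ (i : ℕ) = (P.map (Int.castRingHom ℂ)).eval (lams j) := by
  have hΛ1 : Λ ≠ 1 := by
    intro h
    have : Λ.natDegree = 0 := by rw [h]; simp
    exact (NeZero.ne n) (by omega)
  have hRd : (P %ₘ Λ).natDegree < n := hd ▸ Polynomial.natDegree_modByMonic_lt P hm hΛ1
  refine ⟨fun i => (P %ₘ Λ).coeff i, fun j => ?_⟩
  have hroot : (Λ.map (Int.castRingHom ℂ)).eval (lams j) = 0 := by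
    rw [hr, Polynomial.eval_prod]
    exact Finset.prod_eq_zero (Finset.mem_univ j) (by simp)
  have hRcd : ((P %ₘ Λ).map (Int.castRingHom ℂ)).natDegree < n :=
    lt_of_le_of_lt Polynomial.natDegree_map_le hRd
  have h1 : ((P %ₘ Λ).map (Int.castRingHom ℂ)).eval (lams j)
      = ∑ i ∈ Finset.range n, ((P %ₘ Λ).map (Int.castRingHom ℂ)).coeff i * lams j ^ i :=
    Polynomial.eval_eq_sum_range' hRcd _
  have h2 : ∑ i : Fin n, ((P %ₘ Λ).coeff (i:ℕ) : ℂ) * lams j ^ (i:ℕ)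
      = ∑ i ∈ Finset.range n, ((P %ₘ Λ).coeff i : ℂ) * lams j ^ i :=
    Fin.sum_univ_eq_sum_range (fun i => ((P %ₘ Λ).coeff i : ℂ) * lams j ^ i) n
  have h3 := Polynomial.modByMonic_add_div P Λ
  have h4 : ((P %ₘ Λ).map (Int.castRingHom ℂ)).eval (lams j)
      = (P.map (Int.castRingHom ℂ)).eval (lams j) := by
    conv_rhs => rw [← h3]
    simp [Polynomial.map_add, Polynomial.map_mul, hroot]
  rw [h2, ← h4, h1]
  simp [Polynomial.coeff_map]

/-- The conjugates of a PV number are pairwise distinct. -/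
lemma ql_inj {n : ℕ} [NeZero n] (lams : Fin n → ℂ) {Λ : Polynomial ℤ}
    (hm : Λ.Monic) (hirr : Irreducible Λ)
    (hr : Λ.map (Int.castRingHom ℂ) = ∏ j, (Polynomial.X - Polynomial.C (lams j))) :
    Function.Injective lams := by
  have hQ : Irreducible (Λ.map (Int.castRingHom ℚ)) :=
    (Polynomial.IsPrimitive.Int.irreducible_iff_irreducible_map_cast hm.isPrimitive).mp hirr
  have hsep : (Λ.map (Int.castRingHom ℚ)).Separable := hQ.separable
  have hsepC : (Λ.map (Int.castRingHom ℂ)).Separable := by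
    have : (Λ.map (Int.castRingHom ℚ)).map (algebraMap ℚ ℂ) = Λ.map (Int.castRingHom ℂ) := by
      rw [Polynomial.map_map]
      congr 1
    rw [← this]
    exact hsep.map
  rw [hr] at hsepC
  exact Polynomial.separable_prod_X_sub_C_iff.mp hsepC

/-- If all "conjugate coordinates" of an integer vector are bounded, then the vector's
entries are bounded via the inverse Vandermonde matrix. -/
lemma ql_coord_bound {n : ℕ} [NeZero n] (lams : Fin n → ℂ) (hinj : Function.Injective lams)
    (C : Fin n → ℝ) (g : Fin n → ℤ)
    (hg : ∀ j, ‖∑ i, (g i : ℂ) * lams j ^ (i : ℕ)‖ ≤ C j) (i : Fin n) :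
    |(g i : ℝ)| ≤ ∑ j, ‖(Matrix.vandermonde lams)⁻¹ i j‖ * C j := by
  set A := Matrix.vandermonde lams with hA
  have hdet : IsUnit A.det := by
    rw [isUnit_iff_ne_zero, hA, Matrix.det_vandermonde]
    refine Finset.prod_ne_zero_iff.mpr fun a _ => Finset.prod_ne_zero_iff.mpr fun b hb => ?_
    rw [sub_ne_zero]
    exact fun h => (Finset.mem_Ioi.mp hb).ne' (hinj h)
  set gc : Fin n → ℂ := fun i => (g i : ℂ) with hgc
  have hmul : A.mulVec gc = fun j => ∑ i, (g i : ℂ) * lams j ^ (i : ℕ) := by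
    funext j
    simp [Matrix.mulVec, dotProduct, hA, Matrix.vandermonde, hgc, mul_comm]
  have hid : gc = A⁻¹.mulVec (A.mulVec gc) := by
    rw [Matrix.mulVec_mulVec, Matrix.nonsing_inv_mul A hdet, Matrix.one_mulVec]
  have h1 : (g i : ℂ) = ∑ j, A⁻¹ i j * (∑ k, (g k : ℂ) * lams j ^ (k : ℕ)) := by
    conv_lhs => rw [show ((g i : ℂ)) = gc i from rfl, hid]
    rw [hmul]
    rfl
  calc |(g i : ℝ)| = ‖(g i : ℂ)‖ := (Complex.norm_intCast _).symm
    _ = ‖∑ j, A⁻¹ i j * (∑ k, (g k : ℂ) * lams j ^ (k : ℕ))‖ := by rw [← h1]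
    _ ≤ ∑ j, ‖A⁻¹ i j * (∑ k, (g k : ℂ) * lams j ^ (k : ℕ))‖ :=
        norm_sum_le _ _
    _ ≤ ∑ j, ‖A⁻¹ i j‖ * C j := by
        refine Finset.sum_le_sum fun j _ => ?_
        rw [norm_mul]
        exact mul_le_mul_of_nonneg_left (hg j) (norm_nonneg _)
/-- Every real number is within `lam ^ K` of a point of the quasilattice, where `K` is
chosen so that truncated greedy base-`lam` expansions have conjugates below `σ`. -/
lemma ql_near {n : ℕ} [NeZero n] {lam : ℝ} {lams : Fin n → ℂ} {Λ : Polynomial ℤ}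
    (hPV : IsPV n lam lams Λ) (σ : Fin n → ℝ) (hσ : IsAdmissible n lams σ) :
    ∃ K : ℕ, ∀ r : ℝ, ∃ l' : Fin n → ℤ,
      (∀ j, j ≠ 0 → ‖∑ i, (l' i : ℂ) * lams j ^ (i : ℕ)‖ < σ j) ∧
      |r - ∑ i, (l' i : ℝ) * lam ^ (i : ℕ)| ≤ lam ^ K := by
  obtain ⟨hlam, hlams0, hmonic, hdeg, hirr, hroots, hsmall⟩ := hPV
  obtain ⟨-, hσpos, -⟩ := hσ
  -- choose K
  have hKex : ∀ j : Fin n, ∃ K : ℕ, j ≠ 0 →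
      lam * ‖lams j‖ ^ K < σ j / 2 * (1 - ‖lams j‖) := by
    intro j
    by_cases hj : j = 0
    · exact ⟨0, fun h => absurd hj h⟩
    · have ht : ‖lams j‖ < 1 := hsmall j hj
      have hpos : 0 < σ j / 2 * (1 - ‖lams j‖) / lam :=
        div_pos (mul_pos (by linarith [hσpos j hj]) (by linarith)) (by linarith)
      obtain ⟨K, hK⟩ := exists_pow_lt_of_lt_one hpos ht
      refine ⟨K, fun _ => ?_⟩
      have := (lt_div_iff₀' (show (0:ℝ) < lam by linarith)).mp hK
      linarith
  choose Kf hKf using hKex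
  set K : ℕ := Finset.univ.sup Kf with hKdef
  refine ⟨K, fun r => ?_⟩
  have hlam0 : (0:ℝ) < lam := by linarith
  -- main bound for conjugates of expansion polynomials
  have hconj : ∀ (P : Polynomial ℤ) (N : ℕ) (j : Fin n), j ≠ 0 →
      ‖(P.map (Int.castRingHom ℂ)).eval (lams j)‖ ≤
        lam * ∑ k ∈ Finset.range N, ‖lams j‖ ^ (K + k) →
      ‖(P.map (Int.castRingHom ℂ)).eval (lams j)‖ < σ j := by
    intro P N j hj hb
    set t := ‖lams j‖ with htdef
    have ht0 : 0 ≤ t := norm_nonneg _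
    have ht1 : t < 1 := hsmall j hj
    have hKj : lam * t ^ K ≤ lam * t ^ (Kf j) := by
      refine mul_le_mul_of_nonneg_left ?_ hlam0.le
      exact pow_le_pow_of_le_one ht0 ht1.le (Finset.le_sup (Finset.mem_univ j))
    have hKb : lam * t ^ K ≤ σ j / 2 * (1 - t) := le_of_lt (lt_of_le_of_lt hKj (hKf j hj))
    set S : ℝ := ∑ k ∈ Finset.range N, t ^ k with hSdef
    have hS0 : 0 ≤ S := Finset.sum_nonneg fun k _ => pow_nonneg ht0 k
    have hS1 : (1 - t) * S ≤ 1 := by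
      have := geom_sum_mul t N
      have htN : 0 ≤ t ^ N := pow_nonneg ht0 N
      nlinarith [this]
    have hsum : ∑ k ∈ Finset.range N, t ^ (K + k) = t ^ K * S := by
      rw [hSdef, Finset.mul_sum]
      exact Finset.sum_congr rfl fun k _ => pow_add t K k
    have hfin : lam * (t ^ K * S) ≤ σ j / 2 := by
      have h1 : lam * t ^ K * S ≤ σ j / 2 * (1 - t) * S :=
        mul_le_mul_of_nonneg_right hKb hS0
      have h2 : σ j / 2 * (1 - t) * S ≤ σ j / 2 := by
        have := hσpos j hj
        nlinarith
      nlinarith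
    calc ‖(P.map (Int.castRingHom ℂ)).eval (lams j)‖
        ≤ lam * ∑ k ∈ Finset.range N, t ^ (K + k) := hb
      _ = lam * (t ^ K * S) := by rw [hsum]
      _ ≤ σ j / 2 := hfin
      _ < σ j := by linarith [hσpos j hj]
  -- cast bridge for real eval vs complex eval
  have hbridge : ∀ P : Polynomial ℤ,
      ((((P.map (Int.castRingHom ℝ)).eval lam : ℝ)) : ℂ)
        = (P.map (Int.castRingHom ℂ)).eval (lams 0) := by
    intro P
    have h1 : P.map (Int.castRingHom ℂ) = (P.map (Int.castRingHom ℝ)).map (algebraMap ℝ ℂ) := by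
      rw [Polynomial.map_map]; congr 1
    calc ((((P.map (Int.castRingHom ℝ)).eval lam : ℝ)) : ℂ)
        = algebraMap ℝ ℂ ((P.map (Int.castRingHom ℝ)).eval lam) := rfl
      _ = Polynomial.eval₂ (algebraMap ℝ ℂ) (algebraMap ℝ ℂ lam) (P.map (Int.castRingHom ℝ)) :=
          (Polynomial.eval₂_at_apply _ _).symm
      _ = Polynomial.eval (algebraMap ℝ ℂ lam) ((P.map (Int.castRingHom ℝ)).map (algebraMap ℝ ℂ)) :=
          (Polynomial.eval_map _ _).symm
      _ = (P.map (Int.castRingHom ℂ)).eval (lams 0) := by rw [h1, hlams0]; rfl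
  -- the approximation for nonneg r
  have hpos_case : ∀ r : ℝ, 0 ≤ r → ∃ l' : Fin n → ℤ,
      (∀ j, j ≠ 0 → ‖∑ i, (l' i : ℂ) * lams j ^ (i : ℕ)‖ < σ j) ∧
      0 ≤ r - ∑ i, (l' i : ℝ) * lam ^ (i : ℕ) ∧
      r - ∑ i, (l' i : ℝ) * lam ^ (i : ℕ) < lam ^ K := by
    intro r hr0
    obtain ⟨N, hN⟩ := pow_unbounded_of_one_lt r hlam
    have hrU : r < lam ^ (K + N) :=
      lt_of_lt_of_le hN (pow_le_pow_right₀ hlam.le (Nat.le_add_left N K))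
    obtain ⟨P, h1, h2, h3⟩ := ql_expand hlam lams K N r hr0 hrU
    obtain ⟨l', hl'⟩ := ql_reduce lams hmonic hdeg hroots P
    have hz : ∑ i, (l' i : ℝ) * lam ^ (i : ℕ) = (P.map (Int.castRingHom ℝ)).eval lam := by
      have hc : ((∑ i, (l' i : ℝ) * lam ^ (i : ℕ) : ℝ) : ℂ)
          = ((((P.map (Int.castRingHom ℝ)).eval lam : ℝ)) : ℂ) := by
        rw [hbridge P, ← hl' 0, hlams0]
        push_cast
        rfl
      exact_mod_cast hc
    refine ⟨l', fun j hj => ?_, by rw [hz]; exact h1, by rw [hz]; exact h2⟩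
    rw [hl' j]
    exact hconj P N j hj (h3 j)
  rcases le_or_gt 0 r with hr | hr
  · obtain ⟨l', hb, h1, h2⟩ := hpos_case r hr
    have hpK : (0:ℝ) < lam ^ K := pow_pos hlam0 K
    exact ⟨l', hb, abs_le.mpr ⟨by linarith, h2.le⟩⟩
  · obtain ⟨l', hb, h1, h2⟩ := hpos_case (-r) (by linarith)
    refine ⟨fun i => -(l' i), fun j hj => ?_, ?_⟩
    · have : ∑ i, ((-(l' i) : ℤ) : ℂ) * lams j ^ (i : ℕ)
          = -(∑ i, (l' i : ℂ) * lams j ^ (i : ℕ)) := by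
        push_cast; rw [← Finset.sum_neg_distrib]; exact Finset.sum_congr rfl fun i _ => by ring
      rw [this, norm_neg]
      exact hb j hj
    · have : ∑ i, ((-(l' i) : ℤ) : ℝ) * lam ^ (i : ℕ)
          = -(∑ i, (l' i : ℝ) * lam ^ (i : ℕ)) := by
        push_cast; rw [← Finset.sum_neg_distrib]; exact Finset.sum_congr rfl fun i _ => by ring
      rw [this]
      rw [abs_le]
      constructor <;> nlinarith [pow_pos hlam0 K]

/-- Lemma `QL7` of the paper: the quasilattice `𝔏(σ)` of a PV number is a Meyer set:
there is a finite set `F ⊂ ℝ` with `𝔏(σ) + 𝔏(σ) ⊆ 𝔏(σ) + F`. -/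
theorem quasiLattice_meyer (n : ℕ) [NeZero n] (lam : ℝ) (lams : Fin n → ℂ)
    (Λ : Polynomial ℤ) (hPV : IsPV n lam lams Λ)
    (σ : Fin n → ℝ) (hσ : IsAdmissible n lams σ) :
    ∃ F : Finset ℝ, ∀ x ∈ quasiLattice n lams σ, ∀ y ∈ quasiLattice n lams σ,
      ∃ z ∈ quasiLattice n lams σ, ∃ t ∈ F, x + y = z + t := by
  obtain ⟨K, hK⟩ := ql_near hPV σ hσ
  have hlams0 : lams 0 = (lam : ℂ) := hPV.2.1
  have hinj : Function.Injective lams := ql_inj lams hPV.2.2.1 hPV.2.2.2.2.1 hPV.2.2.2.2.2.1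
  set A := Matrix.vandermonde lams with hAdef
  set C : Fin n → ℝ := fun j => if j = 0 then lam ^ K else 3 * σ j with hCdef
  set B : Fin n → ℝ := fun i => ∑ j, ‖A⁻¹ i j‖ * C j with hBdef
  set T : Finset (Fin n → ℤ) := Fintype.piFinset fun i => Finset.Icc (-⌈B i⌉) ⌈B i⌉ with hTdef
  refine ⟨T.image (fun g => ∑ i : Fin n, (g i : ℝ) * lam ^ (i : ℕ)), ?_⟩
  rintro x ⟨l, hl0, hl⟩ y ⟨m, hm0, hm⟩
  obtain ⟨l', hl'b, hl'd⟩ := hK (x + y)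
  set z : ℝ := ∑ i, (l' i : ℝ) * lam ^ (i : ℕ) with hzdef
  have hz0 : ((z : ℝ) : ℂ) = ∑ i, (l' i : ℂ) * lams 0 ^ (i : ℕ) := by
    rw [hlams0, hzdef]; push_cast; rfl
  refine ⟨z, ⟨l', hz0, hl'b⟩, x + y - z, ?_, by ring⟩
  set f : Fin n → ℤ := fun i => l i + m i - l' i with hfdef
  have hf : ∀ j, (∑ i, (f i : ℂ) * lams j ^ (i : ℕ))
      = (∑ i, (l i : ℂ) * lams j ^ (i : ℕ)) + (∑ i, (m i : ℂ) * lams j ^ (i : ℕ))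
        - (∑ i, (l' i : ℂ) * lams j ^ (i : ℕ)) := by
    intro j
    rw [← Finset.sum_add_distrib, ← Finset.sum_sub_distrib]
    exact Finset.sum_congr rfl fun i _ => by push_cast [hfdef]; ring
  have hfr : ((x + y - z : ℝ) : ℂ) = ∑ i, (f i : ℂ) * lams 0 ^ (i : ℕ) := by
    rw [hf 0, ← hl0, ← hm0, ← hz0]; push_cast; ring
  have hbound : ∀ j, ‖∑ i, (f i : ℂ) * lams j ^ (i : ℕ)‖ ≤ C j := by
    intro j
    by_cases hj : j = 0
    · subst hj
      rw [← hfr, Complex.norm_real]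
      simp only [hCdef, if_pos rfl]
      simpa using hl'd
    · rw [hf j]
      simp only [hCdef, if_neg hj]
      have h1 := (hl j hj).le
      have h2 := (hm j hj).le
      have h3 := (hl'b j hj).le
      have t1 : ‖(∑ i, (l i : ℂ) * lams j ^ (i : ℕ))
          + (∑ i, (m i : ℂ) * lams j ^ (i : ℕ)) - (∑ i, (l' i : ℂ) * lams j ^ (i : ℕ))‖
          ≤ ‖(∑ i, (l i : ℂ) * lams j ^ (i : ℕ))
          + (∑ i, (m i : ℂ) * lams j ^ (i : ℕ))‖ + ‖∑ i, (l' i : ℂ) * lams j ^ (i : ℕ)‖ := by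
        rw [sub_eq_add_neg]
        exact (norm_add_le _ _).trans (by rw [norm_neg])
      have t2 := norm_add_le (∑ i, (l i : ℂ) * lams j ^ (i : ℕ))
        (∑ i, (m i : ℂ) * lams j ^ (i : ℕ))
      linarith
  have hcoords := ql_coord_bound lams hinj C f hbound
  have hfT : f ∈ T := by
    rw [hTdef, Fintype.mem_piFinset]
    intro i
    obtain ⟨hlo, hhi⟩ := abs_le.mp (hcoords i)
    rw [Finset.mem_Icc]
    constructor
    · have : (-⌈B i⌉ : ℝ) ≤ (f i : ℝ) := le_trans (by simpa using neg_le_neg (Int.le_ceil (B i))) hlo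
      exact_mod_cast this
    · have : (f i : ℝ) ≤ (⌈B i⌉ : ℝ) := hhi.trans (Int.le_ceil _)
      exact_mod_cast this
  refine Finset.mem_image.mpr ⟨f, hfT, ?_⟩
  have : ((∑ i, (f i : ℝ) * lam ^ (i : ℕ) : ℝ) : ℂ) = ((x + y - z : ℝ) : ℂ) := by
    rw [hfr, hlams0]; push_cast; rfl
  exact_mod_cast this
end

section
/- Let $P$ be a monic univariate polynomial with complex coefficients having exactly $k\ge 2$ nonzero coefficients. Then there is a constant $c_k>0$, depending only on $k$ (and a bound on the degree, if needed), such that for all $v>0$, the Lebesgue measure of $\{y\in[0,1] : |P(e^{2\pi i y})|\le v\}$ is at most $c_k\, v^{1/(k-1)}$. -/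
open MeasureTheory Polynomial

namespace Boyd
open Set


/-! ### Basic facts about `ee y = exp(2πiy)` -/

noncomputable def ee (y : ℝ) : ℂ := Complex.exp (2 * Real.pi * Complex.I * y)

lemma ee_ne (y : ℝ) : ee y ≠ 0 := Complex.exp_ne_zero _

lemma abs_ee (y : ℝ) : ‖ee y‖ = 1 := by rw [ee, Complex.norm_exp]; simp

lemma cont_ee : Continuous ee := Complex.continuous_exp.comp (by continuity)

lemma ee_inj : Set.InjOn ee (Set.Ico (0:ℝ) 1) := by
  intro x hx y hy h
  rw [ee, ee, Complex.exp_eq_exp_iff_exists_int] at h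
  obtain ⟨n, hn⟩ := h
  have h2 : (2 * Real.pi * Complex.I) * (x : ℂ) = (2 * Real.pi * Complex.I) * ((y : ℝ) + (n : ℤ)) := by
    rw [hn]; push_cast; ring
  have hne : (2 * Real.pi * Complex.I : ℂ) ≠ 0 := by
    simp [Real.pi_ne_zero, Complex.I_ne_zero]
  have h3 : (x : ℂ) = ((y : ℝ) + (n : ℤ) : ℝ) := by
    push_cast
    exact mul_left_cancel₀ hne h2
  have h4 : x = y + n := by exact_mod_cast h3
  have h5 : (-1:ℝ) < (n:ℝ) := by
    simp only [Set.mem_Ico] at hx hy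
    linarith [hx.1, hx.2, hy.1, hy.2]
  have h6 : (n:ℝ) < 1 := by
    simp only [Set.mem_Ico] at hx hy
    linarith [hx.1, hx.2, hy.1, hy.2]
  have h7 : (-1:ℤ) < n := by exact_mod_cast h5
  have h8 : n < 1 := by exact_mod_cast h6
  have : n = 0 := by omega
  subst this
  simpa using h4

lemma hasDerivAt_expc (c : ℂ) (x : ℝ) :
    HasDerivAt (fun y : ℝ => Complex.exp (c * y)) (c * Complex.exp (c * x)) x := by
  have h1 : HasDerivAt (fun w : ℂ => Complex.exp (c * w)) (c * Complex.exp (c * x)) (x : ℂ) := by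
    simpa [mul_comm] using ((hasDerivAt_id (x:ℂ)).const_mul c).cexp
  exact h1.comp_ofReal

/-! ### Sign constancy on intervals and the one-interval sublevel estimate -/

lemma sign_const {f : ℝ → ℝ} (hf : Continuous f) {a b : ℝ}
    (h : ∀ y ∈ Ioo a b, f y ≠ 0) :
    (∀ y ∈ Ioo a b, 0 < f y) ∨ (∀ y ∈ Ioo a b, f y < 0) := by
  by_contra hc
  push_neg at hc
  obtain ⟨⟨y₁, hy₁, hy₁'⟩, ⟨y₂, hy₂, hy₂'⟩⟩ := hc
  have h1 : f y₁ < 0 := lt_of_le_of_ne hy₁' (h y₁ hy₁)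
  have h2 : 0 < f y₂ := lt_of_le_of_ne (by linarith [hy₂']) (Ne.symm (h y₂ hy₂))
  have h0 : (0:ℝ) ∈ Set.uIcc (f y₁) (f y₂) := by
    rw [Set.mem_uIcc]; left; constructor <;> linarith
  obtain ⟨x, hx, hfx⟩ := intermediate_value_uIcc (hf.continuousOn (s := Set.uIcc y₁ y₂)) h0
  have hxJ : x ∈ Ioo a b := by
    rcases Set.mem_uIcc.1 hx with ⟨h3,h4⟩|⟨h3,h4⟩
    · exact ⟨lt_of_lt_of_le hy₁.1 h3, lt_of_le_of_lt h4 hy₂.2⟩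
    · exact ⟨lt_of_lt_of_le hy₂.1 h3, lt_of_le_of_lt h4 hy₁.2⟩
  exact h x hxJ hfx

lemma var_bound {u u' : ℝ → ℝ} (hd : ∀ y, HasDerivAt u (u' y) y) (hc : Continuous u')
    {a b α β : ℝ} (hαβ : α ≤ β) (ha : a ≤ α) (hb : β ≤ b)
    (hsgn : (∀ y ∈ Ioo a b, 0 < u' y) ∨ (∀ y ∈ Ioo a b, u' y < 0))
    {C : ℝ} (hα : |u α| ≤ C) (hβ : |u β| ≤ C) :
    ∫ y in Icc α β, |u' y| ≤ 2 * C := by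
  have hIoo : Ioo α β ⊆ Ioo a b := Ioo_subset_Ioo ha hb
  have hftc : ∫ y in α..β, u' y = u β - u α :=
    intervalIntegral.integral_eq_sub_of_hasDerivAt (fun x _ => hd x)
      (hc.intervalIntegrable α β)
  have hIocIoo : ∫ y in Ioc α β, u' y = ∫ y in Ioo α β, u' y :=
    MeasureTheory.integral_Ioc_eq_integral_Ioo
  rw [MeasureTheory.integral_Icc_eq_integral_Ioo]
  rcases hsgn with hp | hn
  · have h1 : ∫ y in Ioo α β, |u' y| = ∫ y in Ioo α β, u' y := by
      apply MeasureTheory.setIntegral_congr_fun measurableSet_Ioo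
      intro y hy; exact abs_of_pos (hp y (hIoo hy))
    rw [h1, ← hIocIoo, ← intervalIntegral.integral_of_le hαβ, hftc]
    calc u β - u α ≤ |u β| + |u α| := by
          have h2 : u β ≤ |u β| := le_abs_self _
          have h3 : -|u α| ≤ u α := neg_abs_le _
          linarith
      _ ≤ 2 * C := by linarith
  · have h1 : ∫ y in Ioo α β, |u' y| = ∫ y in Ioo α β, -u' y := by
      apply MeasureTheory.setIntegral_congr_fun measurableSet_Ioo
      intro y hy; exact abs_of_neg (hn y (hIoo hy))
    rw [h1, MeasureTheory.integral_neg, ← hIocIoo, ← intervalIntegral.integral_of_le hαβ, hftc]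
    have h2 : u α ≤ |u α| := le_abs_self _
    have h3 : -|u β| ≤ u β := neg_abs_le _
    linarith

lemma interval_est {g g' : ℝ → ℂ} (hd : ∀ y, HasDerivAt g (g' y) y) (hc : Continuous g')
    {a b v M : ℝ} (hM : 0 < M)
    (hre : (∀ y ∈ Ioo a b, 0 < (g' y).re) ∨ (∀ y ∈ Ioo a b, (g' y).re < 0))
    (him : (∀ y ∈ Ioo a b, 0 < (g' y).im) ∨ (∀ y ∈ Ioo a b, (g' y).im < 0)) :
    volume {y | y ∈ Icc a b ∧ ‖g y‖ ≤ v ∧ M ≤ ‖g' y‖} ≤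
      ENNReal.ofReal (4 * v / M) := by
  have hgc : Continuous g := by
    rw [continuous_iff_continuousAt]; exact fun y => (hd y).continuousAt
  set E : Set ℝ := {y | y ∈ Icc a b ∧ ‖g y‖ ≤ v} with hE
  rcases E.eq_empty_or_nonempty with hEe | hne
  · have : {y | y ∈ Icc a b ∧ ‖g y‖ ≤ v ∧ M ≤ ‖g' y‖} = ∅ := by
      rw [Set.eq_empty_iff_forall_notMem] at hEe ⊢
      intro y hy; exact hEe y ⟨hy.1, hy.2.1⟩
    rw [this]; simp
  have hEclosed : IsClosed E := by
    have : E = Icc a b ∩ (fun y => ‖g y‖) ⁻¹' (Iic v) := by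
      ext y
      simp only [hE, Set.mem_setOf_eq, Set.mem_inter_iff, Set.mem_preimage, Set.mem_Iic]
    rw [this]
    exact isClosed_Icc.inter (IsClosed.preimage (continuous_norm.comp hgc) isClosed_Iic)
  have hEsub : E ⊆ Icc a b := fun y hy => hy.1
  have hbdd : BddBelow E := BddBelow.mono hEsub (bddBelow_Icc)
  have hbda : BddAbove E := BddAbove.mono hEsub (bddAbove_Icc)
  set α := sInf E with hα
  set β := sSup E with hβ
  have hαE : α ∈ E := hEclosed.csInf_mem hne hbdd
  have hβE : β ∈ E := hEclosed.csSup_mem hne hbda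
  have hαβ : α ≤ β := csInf_le_csSup hne hbdd hbda
  have haα : a ≤ α := hαE.1.1
  have hβb : β ≤ b := hβE.1.2
  have hEi : E ⊆ Icc α β := fun y hy => ⟨csInf_le hbdd hy, le_csSup hbda hy⟩
  set S : Set ℝ := Icc α β ∩ {y | M ≤ ‖g' y‖} with hS
  have hTS : {y | y ∈ Icc a b ∧ ‖g y‖ ≤ v ∧ M ≤ ‖g' y‖} ⊆ S := by
    intro y hy; exact ⟨hEi ⟨hy.1, hy.2.1⟩, hy.2.2⟩
  refine le_trans (measure_mono hTS) ?_
  have hSm : MeasurableSet S :=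
    measurableSet_Icc.inter ((isClosed_le continuous_const (continuous_norm.comp hc)).measurableSet)
  have hSfin : volume S ≠ ⊤ := by
    refine ne_top_of_le_ne_top ?_ (measure_mono (Set.inter_subset_left))
    exact (measure_Icc_lt_top).ne
  have hdre : ∀ y, HasDerivAt (fun t => (g t).re) ((g' y).re) y := fun y =>
    (Complex.reCLM.hasFDerivAt.comp_hasDerivAt y (hd y))
  have hdim : ∀ y, HasDerivAt (fun t => (g t).im) ((g' y).im) y := fun y =>
    (Complex.imCLM.hasFDerivAt.comp_hasDerivAt y (hd y))
  have hcre : Continuous fun y => (g' y).re := Complex.continuous_re.comp hc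
  have hcim : Continuous fun y => (g' y).im := Complex.continuous_im.comp hc
  have hvab : ∀ y ∈ E, |(g y).re| ≤ v ∧ |(g y).im| ≤ v := by
    intro y hy
    exact ⟨le_trans (Complex.abs_re_le_norm _) hy.2, le_trans (Complex.abs_im_le_norm _) hy.2⟩
  have hIre : ∫ y in Icc α β, |(g' y).re| ≤ 2 * v :=
    var_bound hdre hcre hαβ haα hβb hre (hvab α hαE).1 (hvab β hβE).1
  have hIim : ∫ y in Icc α β, |(g' y).im| ≤ 2 * v :=
    var_bound hdim hcim hαβ haα hβb him (hvab α hαE).2 (hvab β hβE).2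
  have hint : IntegrableOn (fun y => ‖g' y‖) (Icc α β) volume :=
    (continuous_norm.comp hc).integrableOn_Icc
  have key : M * (volume S).toReal ≤ ∫ y in S, ‖g' y‖ :=
    by have h := MeasureTheory.setIntegral_ge_of_const_le hSm hSfin (fun y hy => hy.2)
        (hint.mono_set Set.inter_subset_left)
       rw [smul_eq_mul, mul_comm] at h; exact h
  have h2 : ∫ y in S, ‖g' y‖ ≤ ∫ y in Icc α β, ‖g' y‖ := by
    apply MeasureTheory.setIntegral_mono_set hint
    · filter_upwards with y using norm_nonneg _
    · exact HasSubset.Subset.eventuallyLE (Set.inter_subset_left)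
  have h3 : ∫ y in Icc α β, ‖g' y‖ ≤
      ∫ y in Icc α β, (|(g' y).re| + |(g' y).im|) := by
    apply MeasureTheory.setIntegral_mono_on hint ?_ measurableSet_Icc
    · intro y _; exact Complex.norm_le_abs_re_add_abs_im _
    · exact ((hcre.abs).add (hcim.abs)).integrableOn_Icc
  have h4 : ∫ y in Icc α β, (|(g' y).re| + |(g' y).im|) =
      (∫ y in Icc α β, |(g' y).re|) + ∫ y in Icc α β, |(g' y).im| :=
    MeasureTheory.integral_add (hcre.abs.integrableOn_Icc) (hcim.abs.integrableOn_Icc)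
  have hfinal : M * (volume S).toReal ≤ 4 * v := by
    calc M * (volume S).toReal ≤ ∫ y in S, ‖g' y‖ := key
      _ ≤ ∫ y in Icc α β, ‖g' y‖ := h2
      _ ≤ _ := h3
      _ = _ := h4
      _ ≤ 2*v + 2*v := add_le_add hIre hIim
      _ = 4 * v := by ring
  have hle : (volume S).toReal ≤ 4 * v / M := by
    rw [le_div_iff₀ hM]; linarith [hfinal]
  calc volume S = ENNReal.ofReal ((volume S).toReal) := (ENNReal.ofReal_toReal hSfin).symm
    _ ≤ ENNReal.ofReal (4 * v / M) := ENNReal.ofReal_le_ofReal hle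

/-! ### The derivative polynomial `Qp` -/

noncomputable def Qp (P : Polynomial ℂ) : Polynomial ℂ :=
  ∑ n ∈ P.support, C (((n - P.natTrailingDegree : ℕ) : ℂ) * P.coeff n) * X ^ (n - P.natTrailingDegree)

def Nn (P : Polynomial ℂ) : ℕ := P.natDegree - P.natTrailingDegree

variable {P : Polynomial ℂ}

lemma mem_supp_bounds {n : ℕ} (hn : n ∈ P.support) :
    P.natTrailingDegree ≤ n ∧ n ≤ P.natDegree :=
  ⟨natTrailingDegree_le_of_ne_zero (mem_support_iff.mp hn), le_natDegree_of_mem_supp n hn⟩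

lemma coeff_Qp {t : ℕ} (ht : 1 ≤ t) :
    (Qp P).coeff t = (t : ℂ) * P.coeff (P.natTrailingDegree + t) := by
  set m := P.natTrailingDegree with hm
  rw [Qp, finset_sum_coeff]
  simp only [coeff_C_mul_X_pow]
  rcases em (m + t ∈ P.support) with hmem | hmem
  · rw [Finset.sum_eq_single (m + t)]
    · simp [hm, Nat.add_sub_cancel_left]
    · intro n hn hne
      have hb := mem_supp_bounds hn
      rw [if_neg]
      omega
    · intro h; exact absurd hmem h
  · rw [Finset.sum_eq_zero, notMem_support_iff.mp hmem, mul_zero]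
    intro n hn
    have hb := mem_supp_bounds hn
    rw [if_neg]
    intro h
    apply hmem
    have : n = m + t := by omega
    rwa [← this]

lemma coeff_Qp_zero : (Qp P).coeff 0 = 0 := by
  rw [Qp, finset_sum_coeff]
  apply Finset.sum_eq_zero
  intro n hn
  rw [coeff_C_mul_X_pow]
  split
  · next h => rw [← h]; simp
  · rfl

lemma one_le_of_mem_supp_Qp {j : ℕ} (hj : j ∈ (Qp P).support) : 1 ≤ j := by
  rcases Nat.eq_zero_or_pos j with h | h
  · exact absurd (mem_support_iff.mp hj) (by rw [h]; simp [coeff_Qp_zero])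
  · exact h

lemma natDegree_Qp_le : (Qp P).natDegree ≤ Nn P := by
  rw [natDegree_le_iff_coeff_eq_zero]
  intro t ht
  rw [Nn] at ht
  have ht1 : 1 ≤ t := by omega
  rw [coeff_Qp ht1, coeff_eq_zero_of_natDegree_lt, mul_zero]
  have := P.natTrailingDegree_le_natDegree
  omega

lemma P_ne_zero (hk : 2 ≤ P.support.card) : P ≠ 0 := by
  intro h; rw [h] at hk; simp at hk

lemma trailing_lt_natDegree (hk : 2 ≤ P.support.card) :
    P.natTrailingDegree < P.natDegree := by
  obtain ⟨a, ha, b, hb, hab⟩ := Finset.one_lt_card.mp (by omega : 1 < P.support.card)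
  have h1 := mem_supp_bounds ha
  have h2 := mem_supp_bounds hb
  omega

lemma coeff_Qp_top (hM : P.Monic) :
    (Qp P).coeff (Nn P) = ((Nn P : ℕ) : ℂ) := by
  rw [Nn]
  rcases Nat.eq_zero_or_pos (P.natDegree - P.natTrailingDegree) with h | h
  · rw [h]; exact_mod_cast coeff_Qp_zero
  · rw [coeff_Qp h]
    have : P.natTrailingDegree + (P.natDegree - P.natTrailingDegree) = P.natDegree := by
      have := P.natTrailingDegree_le_natDegree; omega
    rw [this, hM.coeff_natDegree, mul_one]

lemma natDegree_Qp (hM : P.Monic) (hk : 2 ≤ P.support.card) :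
    (Qp P).natDegree = Nn P := by
  have h1 := trailing_lt_natDegree hk
  refine le_antisymm natDegree_Qp_le (le_natDegree_of_ne_zero ?_)
  rw [coeff_Qp_top hM]
  exact_mod_cast (by rw [Nn]; omega : Nn P ≠ 0)

lemma supp_Qp : (Qp P).support = (P.support.erase P.natTrailingDegree).image
    (fun n => n - P.natTrailingDegree) := by
  set m := P.natTrailingDegree
  ext t
  simp only [mem_support_iff, Finset.mem_image, Finset.mem_erase]
  constructor
  · intro ht
    rcases Nat.eq_zero_or_pos t with h0 | h0
    · exact absurd (h0 ▸ ht) (by simp [coeff_Qp_zero])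
    · rw [coeff_Qp h0] at ht
      have h2 : P.coeff (m + t) ≠ 0 := by
        intro h; rw [h, mul_zero] at ht; exact ht rfl
      exact ⟨m + t, ⟨by omega, h2⟩, by omega⟩
  · rintro ⟨n, ⟨hne, hn⟩, rfl⟩
    have hb := mem_supp_bounds (mem_support_iff.mpr hn)
    have h0 : 1 ≤ n - m := by omega
    rw [coeff_Qp h0]
    have : m + (n - m) = n := by omega
    rw [this]
    exact mul_ne_zero (by exact_mod_cast (by omega : n - m ≠ 0)) hn

lemma card_supp_Qp (hk : 2 ≤ P.support.card) :
    (Qp P).support.card = P.support.card - 1 := by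
  rw [supp_Qp, Finset.card_image_of_injOn, Finset.card_erase_of_mem]
  · exact natTrailingDegree_mem_support_of_nonzero (P_ne_zero hk)
  · intro x hx y hy hxy
    have hx' := mem_supp_bounds (Finset.mem_of_mem_erase hx)
    have hy' := mem_supp_bounds (Finset.mem_of_mem_erase hy)
    simp only at hxy
    omega

lemma eval_Qp (w : ℂ) : (Qp P).eval w =
    ∑ n ∈ P.support, ((n - P.natTrailingDegree : ℕ) : ℂ) * P.coeff n * w ^ (n - P.natTrailingDegree) := by
  rw [Qp, eval_finset_sum]; simp [mul_assoc]

lemma eval_Qp' (w : ℂ) : (Qp P).eval w = ∑ j ∈ (Qp P).support, (Qp P).coeff j * w ^ j := by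
  rw [eval_eq_sum, sum_def]

lemma mem_supp_Qp_bounds {j : ℕ} (hj : j ∈ (Qp P).support) : 1 ≤ j ∧ j ≤ Nn P :=
  ⟨one_le_of_mem_supp_Qp hj, le_trans (le_natDegree_of_mem_supp j hj) natDegree_Qp_le⟩

/-! ### The auxiliary function `gg` and its derivative -/

noncomputable def gg (P : Polynomial ℂ) (y : ℝ) : ℂ :=
  Complex.exp (-(2 * Real.pi * Complex.I * P.natTrailingDegree) * y) * P.eval (ee y)

lemma abs_gg (y : ℝ) : ‖gg P y‖ = ‖P.eval (ee y)‖ := by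
  rw [gg, norm_mul, Complex.norm_exp]
  have : (-(2 * ↑Real.pi * Complex.I * (P.natTrailingDegree : ℂ)) * (y:ℂ)).re = 0 := by simp
  rw [this, Real.exp_zero, one_mul]

lemma gg_eq_sum (y : ℝ) : gg P y =
    ∑ n ∈ P.support, P.coeff n *
      Complex.exp ((2 * Real.pi * Complex.I * ((n : ℂ) - P.natTrailingDegree)) * y) := by
  rw [gg, eval_eq_sum, sum_def, Finset.mul_sum]
  apply Finset.sum_congr rfl
  intro n _
  rw [ee, ← Complex.exp_nat_mul, ← mul_assoc, mul_comm (Complex.exp _) (P.coeff n), mul_assoc,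
    ← Complex.exp_add]
  ring_nf

lemma hasDerivAt_gg (y : ℝ) :
    HasDerivAt (gg P) (2 * Real.pi * Complex.I * (Qp P).eval (ee y)) y := by
  set m := P.natTrailingDegree with hm
  have hfun : gg P = fun t : ℝ => ∑ n ∈ P.support, P.coeff n *
      Complex.exp ((2 * Real.pi * Complex.I * ((n : ℂ) - m)) * (t : ℂ)) := funext fun t => gg_eq_sum t
  rw [hfun]
  have h := HasDerivAt.sum (u := P.support) (x := y)
    (A := fun n (t : ℝ) => P.coeff n * Complex.exp ((2 * Real.pi * Complex.I * ((n : ℂ) - m)) * (t : ℂ)))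
    (A' := fun n => P.coeff n * ((2 * Real.pi * Complex.I * ((n : ℂ) - m)) *
      Complex.exp ((2 * Real.pi * Complex.I * ((n : ℂ) - m)) * y)))
    (fun n _ => (hasDerivAt_expc _ y).const_mul (P.coeff n))
  convert h using 1
  · rfl
  · ext t; rw [Finset.sum_apply]
  rw [eval_Qp, Finset.mul_sum]
  apply Finset.sum_congr rfl
  intro n hn
  have hle := (mem_supp_bounds hn).1
  have hcast : ((n - m : ℕ) : ℂ) = (n : ℂ) - (m : ℂ) := by
    push_cast [Nat.cast_sub (show m ≤ n from hle)]; ring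
  have hpow : (ee y) ^ (n - m : ℕ) =
      Complex.exp ((2 * Real.pi * Complex.I * ((n : ℂ) - m)) * y) := by
    rw [ee, ← Complex.exp_nat_mul]
    congr 1
    rw [hcast]
    ring
  rw [hpow, hcast]
  ring

/-! ### The polynomials `Tt` detecting vanishing of `Re`/`Im` of `Qp` on the circle -/

noncomputable def Tt (P : Polynomial ℂ) (s : ℂ) : Polynomial ℂ :=
  (∑ j ∈ (Qp P).support, C ((Qp P).coeff j) * X ^ (Nn P + j)) +
    C s * ∑ j ∈ (Qp P).support, C ((starRingEnd ℂ) ((Qp P).coeff j)) * X ^ (Nn P - j)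

lemma coeff_Tt_top (s : ℂ) : (Tt P s).coeff (2 * Nn P) = (Qp P).coeff (Nn P) := by
  rw [Tt, coeff_add, coeff_C_mul, finset_sum_coeff, finset_sum_coeff]
  have h1 : ∑ j ∈ (Qp P).support, (C ((Qp P).coeff j) * X ^ (Nn P + j)).coeff (2 * Nn P) =
      (Qp P).coeff (Nn P) := by
    have he : ∀ j ∈ (Qp P).support,
        (C ((Qp P).coeff j) * X ^ (Nn P + j)).coeff (2 * Nn P) =
          if j = Nn P then (Qp P).coeff j else 0 := by
      intro j hj
      rw [coeff_C_mul_X_pow]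
      have := mem_supp_Qp_bounds hj
      congr 1
      simp only [eq_iff_iff]
      omega
    rw [Finset.sum_congr rfl he, Finset.sum_ite_eq' (Qp P).support (Nn P)]
    split
    · rfl
    · next h => exact (notMem_support_iff.mp h).symm
  have h2 : ∑ j ∈ (Qp P).support,
      (C ((starRingEnd ℂ) ((Qp P).coeff j)) * X ^ (Nn P - j)).coeff (2 * Nn P) = 0 := by
    apply Finset.sum_eq_zero
    intro j hj
    rw [coeff_C_mul_X_pow, if_neg]
    have := mem_supp_Qp_bounds hj
    omega
  rw [h1, h2, mul_zero, add_zero]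

lemma natDegree_Tt_le (s : ℂ) : (Tt P s).natDegree ≤ 2 * Nn P := by
  rw [natDegree_le_iff_coeff_eq_zero]
  intro t ht
  rw [Tt, coeff_add, coeff_C_mul, finset_sum_coeff, finset_sum_coeff]
  have h1 : ∀ j ∈ (Qp P).support, (C ((Qp P).coeff j) * X ^ (Nn P + j)).coeff t = 0 := by
    intro j hj
    rw [coeff_C_mul_X_pow, if_neg]
    have := mem_supp_Qp_bounds hj
    omega
  have h2 : ∀ j ∈ (Qp P).support,
      (C ((starRingEnd ℂ) ((Qp P).coeff j)) * X ^ (Nn P - j)).coeff t = 0 := by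
    intro j hj
    rw [coeff_C_mul_X_pow, if_neg]
    have := mem_supp_Qp_bounds hj
    omega
  rw [Finset.sum_eq_zero h1, Finset.sum_eq_zero h2, mul_zero, add_zero]

lemma Tt_ne_zero (hM : P.Monic) (hk : 2 ≤ P.support.card) (s : ℂ) : Tt P s ≠ 0 := by
  intro h
  have h1 := coeff_Tt_top (P := P) s
  rw [h, coeff_zero, coeff_Qp_top hM] at h1
  have h2 := trailing_lt_natDegree hk
  have : (Nn P : ℕ) = 0 := by exact_mod_cast h1.symm
  rw [Nn] at this
  omega

lemma eval_Tt (s : ℂ) (y : ℝ) : (Tt P s).eval (ee y) =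
    (ee y) ^ (Nn P) * ((Qp P).eval (ee y) + s * (starRingEnd ℂ) ((Qp P).eval (ee y))) := by
  set w := ee y with hw
  have habs : ∀ j : ℕ, ‖w ^ j‖ = 1 := by
    intro j; rw [norm_pow, abs_ee, one_pow]
  rw [Tt, eval_add, eval_mul, eval_C, eval_finset_sum, eval_finset_sum]
  have h1 : ∑ j ∈ (Qp P).support, (C ((Qp P).coeff j) * X ^ (Nn P + j)).eval w =
      w ^ (Nn P) * (Qp P).eval w := by
    rw [eval_Qp', Finset.mul_sum]
    apply Finset.sum_congr rfl
    intro j _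
    rw [eval_mul, eval_C, eval_pow, eval_X, pow_add]
    ring
  have h2 : ∑ j ∈ (Qp P).support,
      (C ((starRingEnd ℂ) ((Qp P).coeff j)) * X ^ (Nn P - j)).eval w =
      w ^ (Nn P) * (starRingEnd ℂ) ((Qp P).eval w) := by
    rw [eval_Qp', map_sum, Finset.mul_sum]
    apply Finset.sum_congr rfl
    intro j hj
    rw [eval_mul, eval_C, eval_pow, eval_X]
    have hjN := (mem_supp_Qp_bounds hj).2
    rw [pow_sub₀ w (ee_ne y) hjN, Complex.inv_eq_conj (habs j), map_mul, map_pow]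
    ring_nf
  rw [h1, h2]
  ring

noncomputable def UU (P : Polynomial ℂ) : Polynomial ℂ := Tt P 1 * Tt P (-1)

lemma UU_ne_zero (hM : P.Monic) (hk : 2 ≤ P.support.card) : UU P ≠ 0 :=
  mul_ne_zero (Tt_ne_zero hM hk 1) (Tt_ne_zero hM hk (-1))

lemma natDegree_UU_le : (UU P).natDegree ≤ 4 * Nn P := by
  refine le_trans (natDegree_mul_le) ?_
  have := natDegree_Tt_le (P := P) 1
  have := natDegree_Tt_le (P := P) (-1)
  omega

lemma re_im_ne_zero {y : ℝ} (h : (UU P).eval (ee y) ≠ 0) :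
    ((Qp P).eval (ee y)).re ≠ 0 ∧ ((Qp P).eval (ee y)).im ≠ 0 := by
  rw [UU, eval_mul] at h
  have h1 : (Tt P 1).eval (ee y) ≠ 0 := fun hh => h (by rw [hh, zero_mul])
  have h2 : (Tt P (-1)).eval (ee y) ≠ 0 := fun hh => h (by rw [hh, mul_zero])
  rw [eval_Tt] at h1 h2
  set z := (Qp P).eval (ee y)
  constructor
  · intro hre
    apply h1
    rw [one_mul, Complex.add_conj, hre]
    simp
  · intro him
    apply h2
    rw [neg_one_mul, ← sub_eq_add_neg, Complex.sub_conj, him]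
    simp

/-! ### The cut set -/

def Rset (P : Polynomial ℂ) : Set ℝ := {y | y ∈ Ico (0:ℝ) 1 ∧ (UU P).eval (ee y) = 0}

lemma Rset_finite_card (hM : P.Monic) (hk : 2 ≤ P.support.card) :
    (Rset P).Finite ∧ (Rset P).ncard ≤ 4 * Nn P := by
  have hU := UU_ne_zero hM hk
  have hmap : ∀ y ∈ Rset P, ee y ∈ ((UU P).roots.toFinset : Set ℂ) := by
    intro y hy
    simp only [Finset.mem_coe, Multiset.mem_toFinset, mem_roots hU]
    exact hy.2
  have hinj : Set.InjOn ee (Rset P) := ee_inj.mono (fun y hy => hy.1)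
  have htfin : ((UU P).roots.toFinset : Set ℂ).Finite := (UU P).roots.toFinset.finite_toSet
  have hfin : (Rset P).Finite := by
    apply Set.Finite.of_finite_image ?_ hinj
    exact htfin.subset (Set.image_subset_iff.mpr hmap)
  refine ⟨hfin, ?_⟩
  calc (Rset P).ncard ≤ ((UU P).roots.toFinset : Set ℂ).ncard :=
        Set.ncard_le_ncard_of_injOn ee hmap hinj htfin
    _ = (UU P).roots.toFinset.card := Set.ncard_coe_finset _
    _ ≤ Multiset.card (UU P).roots := Multiset.toFinset_card_le _
    _ ≤ (UU P).natDegree := (UU P).card_roots'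
    _ ≤ 4 * Nn P := natDegree_UU_le

/-! ### Gap partition -/

noncomputable def Gaps (Z : Finset ℝ) : Finset (ℝ × ℝ) :=
  (Z ×ˢ Z).filter fun p => p.1 < p.2 ∧ ∀ x ∈ Z, ¬(p.1 < x ∧ x < p.2)

lemma card_Gaps (Z : Finset ℝ) : (Gaps Z).card ≤ Z.card := by
  have hinj : Set.InjOn Prod.fst (Gaps Z : Set (ℝ × ℝ)) := by
    intro p hp q hq hpq
    simp only [Gaps, Finset.coe_filter, Set.mem_setOf_eq, Finset.mem_product] at hp hq
    obtain ⟨⟨hp1, hp2⟩, hplt, hpgap⟩ := hp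
    obtain ⟨⟨hq1, hq2⟩, hqlt, hqgap⟩ := hq
    have h1 : p.1 = q.1 := hpq
    rcases lt_trichotomy p.2 q.2 with h | h | h
    · exact absurd ⟨h1 ▸ hplt, h⟩ (hqgap p.2 hp2)
    · exact Prod.ext h1 h
    · exact absurd ⟨(h1.symm ▸ hqlt), h⟩ (hpgap q.2 hq2)
  calc (Gaps Z).card = ((Gaps Z).image Prod.fst).card :=
        (Finset.card_image_of_injOn hinj).symm
    _ ≤ Z.card := by
        apply Finset.card_le_card
        intro x hx
        simp only [Finset.mem_image] at hx
        obtain ⟨p, hp, rfl⟩ := hx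
        simp only [Gaps, Finset.mem_filter, Finset.mem_product] at hp
        exact hp.1.1

lemma gap_cover (Z : Finset ℝ) (h0 : (0:ℝ) ∈ Z) (h1 : (1:ℝ) ∈ Z) (A : Set ℝ) (hA : A ⊆ Icc 0 1) :
    volume A ≤ ∑ p ∈ Gaps Z, volume (A ∩ Ioo p.1 p.2) := by
  have hcover : A ⊆ ↑Z ∪ ⋃ p ∈ Gaps Z, (A ∩ Ioo p.1 p.2) := by
    intro y hy
    by_cases hyZ : y ∈ Z
    · exact Or.inl hyZ
    right
    have hy01 := hA hy
    set S1 := Z.filter (· < y) with hS1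
    set S2 := Z.filter (y < ·) with hS2
    have hS1ne : S1.Nonempty := by
      refine ⟨0, Finset.mem_filter.mpr ⟨h0, ?_⟩⟩
      rcases eq_or_lt_of_le hy01.1 with h | h
      · exact absurd (h ▸ h0) hyZ
      · exact h
    have hS2ne : S2.Nonempty := by
      refine ⟨1, Finset.mem_filter.mpr ⟨h1, ?_⟩⟩
      rcases eq_or_lt_of_le hy01.2 with h | h
      · exact absurd (h ▸ h1) hyZ
      · exact h
    set a := S1.max' hS1ne with ha
    set b := S2.min' hS2ne with hb
    have haZ : a ∈ Z := (Finset.mem_filter.mp (S1.max'_mem hS1ne)).1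
    have hbZ : b ∈ Z := (Finset.mem_filter.mp (S2.min'_mem hS2ne)).1
    have hay : a < y := (Finset.mem_filter.mp (S1.max'_mem hS1ne)).2
    have hyb : y < b := (Finset.mem_filter.mp (S2.min'_mem hS2ne)).2
    have hgap : ∀ x ∈ Z, ¬(a < x ∧ x < b) := by
      rintro x hx ⟨hax, hxb⟩
      rcases lt_trichotomy x y with h | h | h
      · exact absurd (S1.le_max' x (Finset.mem_filter.mpr ⟨hx, h⟩)) (not_le.mpr hax)
      · exact hyZ (h ▸ hx)
      · exact absurd (S2.min'_le x (Finset.mem_filter.mpr ⟨hx, h⟩)) (not_le.mpr hxb)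
    have hmem : (a, b) ∈ Gaps Z := Finset.mem_filter.mpr ⟨Finset.mem_product.mpr ⟨haZ, hbZ⟩,
      lt_trans hay hyb, hgap⟩
    exact Set.mem_biUnion hmem ⟨hy, hay, hyb⟩
  calc volume A ≤ volume (↑Z ∪ ⋃ p ∈ Gaps Z, (A ∩ Ioo p.1 p.2)) := measure_mono hcover
    _ ≤ volume (↑Z : Set ℝ) + volume (⋃ p ∈ Gaps Z, (A ∩ Ioo p.1 p.2)) := measure_union_le _ _
    _ = volume (⋃ p ∈ Gaps Z, (A ∩ Ioo p.1 p.2)) := by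
        rw [Set.Finite.measure_zero Z.finite_toSet volume, zero_add]
    _ ≤ ∑ p ∈ Gaps Z, volume (A ∩ Ioo p.1 p.2) := measure_biUnion_finset_le _ _

/-! ### The core estimate -/

lemma core (hM : P.Monic) (hk : 2 ≤ P.support.card) {v w : ℝ} (hv : 0 < v) (hw : 0 < w) :
    volume {y : ℝ | y ∈ Icc (0:ℝ) 1 ∧ ‖P.eval (ee y)‖ ≤ v} ≤
      ENNReal.ofReal (4 * v / w) +
      volume {y : ℝ | y ∈ Icc (0:ℝ) 1 ∧ ‖(Qp P).eval (ee y)‖ < (Nn P) * w} := by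
  have hN : 1 ≤ Nn P := by have := trailing_lt_natDegree hk; rw [Nn]; omega
  have hπ := Real.pi_gt_three
  set N := Nn P with hNdef
  set M := 2 * Real.pi * ((N : ℝ) * w) with hMdef
  have hNR : (1:ℝ) ≤ (N:ℝ) := by exact_mod_cast hN
  have hMpos : 0 < M := by
    rw [hMdef]; positivity
  set g' : ℝ → ℂ := fun y => 2 * Real.pi * Complex.I * (Qp P).eval (ee y) with hg'
  have hd : ∀ y, HasDerivAt (gg P) (g' y) y := hasDerivAt_gg
  have hc : Continuous g' :=
    continuous_const.mul ((Qp P).continuous.comp cont_ee)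
  have habs' : ∀ y, ‖g' y‖ =
      2 * Real.pi * ‖(Qp P).eval (ee y)‖ := by
    intro y
    rw [hg', norm_mul]
    congr 1
    simp only [norm_mul, Complex.norm_I, Complex.norm_two, Complex.norm_real, Real.norm_eq_abs, mul_one]
    rw [abs_of_pos Real.pi_pos]
  set E := {y : ℝ | y ∈ Icc (0:ℝ) 1 ∧ ‖P.eval (ee y)‖ ≤ v} with hE
  set Bad := {y : ℝ | y ∈ Icc (0:ℝ) 1 ∧ ‖(Qp P).eval (ee y)‖ < (N:ℝ) * w} with hBad
  set EG := {y : ℝ | y ∈ Icc (0:ℝ) 1 ∧ ‖gg P y‖ ≤ v ∧ M ≤ ‖g' y‖} with hEG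
  have hsplit : E ⊆ EG ∪ Bad := by
    intro y hy
    rcases le_or_gt ((N:ℝ) * w) (‖(Qp P).eval (ee y)‖) with h | h
    · left
      refine ⟨hy.1, by rw [abs_gg]; exact hy.2, ?_⟩
      rw [habs', hMdef]
      have h2π : (0:ℝ) < 2 * Real.pi := by positivity
      exact mul_le_mul_of_nonneg_left h (le_of_lt h2π)
    · exact Or.inr ⟨hy.1, h⟩
  refine le_trans (measure_mono hsplit) (le_trans (measure_union_le _ _) ?_)
  refine add_le_add ?_ (le_refl _)
  -- bound volume EG
  obtain ⟨hfin, hcard⟩ := Rset_finite_card hM hk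
  set Z : Finset ℝ := insert (0:ℝ) (insert (1:ℝ) hfin.toFinset) with hZ
  have h0Z : (0:ℝ) ∈ Z := Finset.mem_insert_self _ _
  have h1Z : (1:ℝ) ∈ Z := Finset.mem_insert_of_mem (Finset.mem_insert_self _ _)
  have hZcard : Z.card ≤ 4 * N + 2 := by
    calc Z.card ≤ (insert (1:ℝ) hfin.toFinset).card + 1 := Finset.card_insert_le _ _
      _ ≤ (hfin.toFinset.card + 1) + 1 := by
          have := Finset.card_insert_le (1:ℝ) hfin.toFinset; omega
      _ ≤ 4 * N + 2 := by
          have : (Rset P).ncard = hfin.toFinset.card := Set.ncard_eq_toFinset_card _ hfin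
          omega
  have hZ01 : ∀ x ∈ Z, x ∈ Icc (0:ℝ) 1 := by
    intro x hx
    rw [hZ, Finset.mem_insert, Finset.mem_insert] at hx
    rcases hx with rfl | rfl | hx
    · exact ⟨le_refl _, zero_le_one⟩
    · exact ⟨zero_le_one, le_refl _⟩
    · have : x ∈ Rset P := hfin.mem_toFinset.mp hx
      exact ⟨this.1.1, le_of_lt this.1.2⟩
  have hEGIcc : EG ⊆ Icc (0:ℝ) 1 := fun y hy => hy.1
  have hper : ∀ p ∈ Gaps Z, volume (EG ∩ Ioo p.1 p.2) ≤ ENNReal.ofReal (4 * v / M) := by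
    rintro ⟨a, b⟩ hp
    simp only [Gaps, Finset.mem_filter, Finset.mem_product] at hp
    obtain ⟨⟨haZ, hbZ⟩, hab, hgap⟩ := hp
    have hU : ∀ y ∈ Ioo a b, (UU P).eval (ee y) ≠ 0 := by
      intro y hy hzero
      have hy01 : y ∈ Ico (0:ℝ) 1 :=
        ⟨le_trans (hZ01 a haZ).1 (le_of_lt hy.1), lt_of_lt_of_le hy.2 (hZ01 b hbZ).2⟩
      have hyZ : y ∈ Z := by
        rw [hZ, Finset.mem_insert, Finset.mem_insert]
        right; right
        exact hfin.mem_toFinset.mpr ⟨hy01, hzero⟩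
      exact hgap y hyZ ⟨hy.1, hy.2⟩
    have hrene : ∀ y ∈ Ioo a b, (g' y).re ≠ 0 := by
      intro y hy
      have h := (re_im_ne_zero (hU y hy)).2
      rw [hg']
      have : (2 * (Real.pi:ℂ) * Complex.I * (Qp P).eval (ee y)).re =
          2 * Real.pi * -((Qp P).eval (ee y)).im := by
        have h2 : (2 * (Real.pi:ℂ)) = ((2 * Real.pi : ℝ) : ℂ) := by push_cast; ring
        rw [mul_assoc, h2, Complex.re_ofReal_mul, Complex.I_mul_re]
      rw [this]
      exact mul_ne_zero (by positivity) (neg_ne_zero.mpr h)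
    have himne : ∀ y ∈ Ioo a b, (g' y).im ≠ 0 := by
      intro y hy
      have h := (re_im_ne_zero (hU y hy)).1
      rw [hg']
      have : (2 * (Real.pi:ℂ) * Complex.I * (Qp P).eval (ee y)).im =
          2 * Real.pi * ((Qp P).eval (ee y)).re := by
        have h2 : (2 * (Real.pi:ℂ)) = ((2 * Real.pi : ℝ) : ℂ) := by push_cast; ring
        rw [mul_assoc, h2, Complex.im_ofReal_mul, Complex.I_mul_im]
      rw [this]
      exact mul_ne_zero (by positivity) h
    have hsgnre := sign_const (Complex.continuous_re.comp hc) hrene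
    have hsgnim := sign_const (Complex.continuous_im.comp hc) himne
    have hss : EG ∩ Ioo a b ⊆
        {y | y ∈ Icc a b ∧ ‖gg P y‖ ≤ v ∧ M ≤ ‖g' y‖} := by
      rintro y ⟨hy1, hy2⟩
      exact ⟨⟨le_of_lt hy2.1, le_of_lt hy2.2⟩, hy1.2.1, hy1.2.2⟩
    exact le_trans (measure_mono hss) (interval_est hd hc hMpos hsgnre hsgnim)
  have hsum : volume EG ≤ ∑ _p ∈ Gaps Z, ENNReal.ofReal (4 * v / M) :=
    le_trans (gap_cover Z h0Z h1Z EG hEGIcc) (Finset.sum_le_sum hper)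
  rw [Finset.sum_const] at hsum
  refine le_trans hsum ?_
  rw [nsmul_eq_mul, ← ENNReal.ofReal_natCast, ← ENNReal.ofReal_mul (Nat.cast_nonneg _)]
  apply ENNReal.ofReal_le_ofReal
  have hcardR : ((Gaps Z).card : ℝ) ≤ 2 * Real.pi * N := by
    have h1 : (Gaps Z).card ≤ 4 * N + 2 := le_trans (card_Gaps Z) hZcard
    have h2 : ((Gaps Z).card : ℝ) ≤ (4 * N + 2 : ℕ) := by exact_mod_cast h1
    have h3 : ((4 * N + 2 : ℕ) : ℝ) = 4 * (N:ℝ) + 2 := by push_cast; ring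
    nlinarith [hNR, hπ]
  have hq : (0:ℝ) ≤ 4 * v / M := by positivity
  calc ((Gaps Z).card : ℝ) * (4 * v / M) ≤ (2 * Real.pi * N) * (4 * v / M) :=
        mul_le_mul_of_nonneg_right hcardR hq
    _ = 4 * v / w := by
        rw [hMdef]
        field_simp

/-! ### Base case helper: two-term polynomials -/

lemma Qp_two (hM : P.Monic) (hcard : P.support.card = 2) :
    Qp P = C ((Nn P : ℕ) : ℂ) * X ^ (Nn P) := by
  have hk2 : 2 ≤ P.support.card := by omega
  have hP0 := P_ne_zero hk2
  have hlt := trailing_lt_natDegree hk2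
  have hm : P.natTrailingDegree ∈ P.support := natTrailingDegree_mem_support_of_nonzero hP0
  have hd : P.natDegree ∈ P.support := natDegree_mem_support_of_nonzero hP0
  have hsupp : P.support = {P.natTrailingDegree, P.natDegree} := by
    refine (Finset.eq_of_subset_of_card_le ?_ ?_).symm
    · intro x hx
      simp only [Finset.mem_insert, Finset.mem_singleton] at hx
      rcases hx with rfl | rfl
      · exact hm
      · exact hd
    · rw [hcard, Finset.card_insert_of_notMem (by simp [Nat.ne_of_lt hlt]),
        Finset.card_singleton]
  ext t
  rcases Nat.eq_zero_or_pos t with rfl | ht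
  · rw [coeff_Qp_zero, coeff_C_mul_X_pow, if_neg]
    rw [Nn]; omega
  by_cases htN : t = Nn P
  · subst htN
    rw [coeff_Qp_top hM, coeff_C_mul_X_pow, if_pos rfl]
  · rw [coeff_Qp ht, coeff_C_mul_X_pow, if_neg htN]
    have hns : P.natTrailingDegree + t ∉ P.support := by
      rw [hsupp]
      simp only [Finset.mem_insert, Finset.mem_singleton]
      rintro (h | h)
      · omega
      · apply htN; rw [Nn]; omega
    rw [notMem_support_iff.mp hns, mul_zero]

/-! ### The main induction -/

lemma main : ∀ k : ℕ, 2 ≤ k → ∀ P : Polynomial ℂ, P.Monic → P.support.card = k →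
    ∀ v : ℝ, 0 < v →
    volume {y : ℝ | y ∈ Icc (0:ℝ) 1 ∧ ‖P.eval (ee y)‖ ≤ v} ≤
      ENNReal.ofReal (5 * k * v ^ ((1:ℝ) / ((k:ℝ) - 1))) := by
  intro k hk
  induction k, hk using Nat.le_induction with
  | base =>
    intro P hM hcard v hv
    have hk2 : 2 ≤ P.support.card := by omega
    have hN : 1 ≤ Nn P := by have := trailing_lt_natDegree hk2; rw [Nn]; omega
    have h := core hM hk2 hv one_pos
    have hempty : {y : ℝ | y ∈ Icc (0:ℝ) 1 ∧
        ‖(Qp P).eval (ee y)‖ < (Nn P) * 1} = ∅ := by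
      rw [Set.eq_empty_iff_forall_notMem]
      rintro y ⟨-, hy⟩
      rw [Qp_two hM hcard, eval_mul, eval_C, eval_pow, eval_X, norm_mul, norm_pow, abs_ee,
        one_pow, mul_one, Complex.norm_natCast, mul_one] at hy
      exact lt_irrefl _ hy
    rw [hempty, measure_empty, add_zero] at h
    refine le_trans h (ENNReal.ofReal_le_ofReal ?_)
    have he : (1:ℝ) / (((2:ℕ):ℝ) - 1) = 1 := by norm_num
    rw [he, Real.rpow_one]
    push_cast
    linarith
  | succ k hk IH =>
    intro P hM hcard v hv
    have hk2 : 2 ≤ P.support.card := by omega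
    have hN : 1 ≤ Nn P := by have := trailing_lt_natDegree hk2; rw [Nn]; omega
    have hkR : (2:ℝ) ≤ (k:ℝ) := by exact_mod_cast hk
    have hkne : (k:ℝ) ≠ 0 := by linarith
    have hk1ne : (k:ℝ) - 1 ≠ 0 := by linarith
    set w := v ^ (((k:ℝ) - 1) / (k:ℝ)) with hwdef
    have hw : 0 < w := Real.rpow_pos_of_pos hv _
    have hcore := core hM hk2 hv hw
    set Qn := C (((Nn P : ℕ):ℂ))⁻¹ * Qp P with hQn
    have hNc : ((Nn P : ℕ):ℂ) ≠ 0 := Nat.cast_ne_zero.mpr (by omega)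
    have hNinv : (((Nn P : ℕ):ℂ))⁻¹ ≠ 0 := inv_ne_zero hNc
    have hmonic : Qn.Monic := by
      show Qn.leadingCoeff = 1
      rw [leadingCoeff, hQn, natDegree_C_mul hNinv, natDegree_Qp hM hk2, coeff_C_mul,
        coeff_Qp_top hM, inv_mul_cancel₀ hNc]
    have hsuppQn : Qn.support = (Qp P).support := by
      ext t
      simp only [mem_support_iff, hQn, coeff_C_mul]
      constructor
      · intro h hc; exact h (by rw [hc, mul_zero])
      · exact fun h => mul_ne_zero hNinv h
    have hcardQn : Qn.support.card = k := by
      rw [hsuppQn, card_supp_Qp hk2, hcard]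
      omega
    have hIH := IH Qn hmonic hcardQn w hw
    have hsub : {y : ℝ | y ∈ Icc (0:ℝ) 1 ∧ ‖(Qp P).eval (ee y)‖ < (Nn P) * w} ⊆
        {y : ℝ | y ∈ Icc (0:ℝ) 1 ∧ ‖Qn.eval (ee y)‖ ≤ w} := by
      rintro y ⟨hy1, hy2⟩
      refine ⟨hy1, ?_⟩
      rw [hQn, eval_mul, eval_C, norm_mul, norm_inv, Complex.norm_natCast]
      have hNR : (0:ℝ) < (Nn P : ℝ) := by exact_mod_cast (by omega : 0 < Nn P)
      have h3 : ((Nn P:ℝ))⁻¹ * ‖(Qp P).eval (ee y)‖ <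
          ((Nn P:ℝ))⁻¹ * ((Nn P:ℝ) * w) :=
        mul_lt_mul_of_pos_left hy2 (inv_pos.mpr hNR)
      rw [← mul_assoc, inv_mul_cancel₀ (ne_of_gt hNR), one_mul] at h3
      exact le_of_lt h3
    have hbad : volume {y : ℝ | y ∈ Icc (0:ℝ) 1 ∧
        ‖(Qp P).eval (ee y)‖ < (Nn P) * w} ≤
        ENNReal.ofReal (5 * k * w ^ ((1:ℝ) / ((k:ℝ) - 1))) :=
      le_trans (measure_mono hsub) hIH
    refine le_trans hcore (le_trans (add_le_add (le_refl _) hbad) ?_)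
    -- rpow arithmetic
    have e1 : 4 * v / w = 4 * v ^ ((1:ℝ) / (k:ℝ)) := by
      rw [hwdef, mul_div_assoc]
      congr 1
      have h5 : v / v ^ (((k:ℝ) - 1) / (k:ℝ)) = v ^ ((1:ℝ) - ((k:ℝ) - 1) / (k:ℝ)) := by
        rw [Real.rpow_sub hv, Real.rpow_one]
      rw [h5]
      congr 1
      field_simp
      ring
    have e2 : w ^ ((1:ℝ) / ((k:ℝ) - 1)) = v ^ ((1:ℝ) / (k:ℝ)) := by
      rw [hwdef, ← Real.rpow_mul (le_of_lt hv)]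
      congr 1
      field_simp
    rw [e1, e2, ← ENNReal.ofReal_add (by positivity) (by positivity)]
    apply ENNReal.ofReal_le_ofReal
    have e3 : ((k + 1 : ℕ) : ℝ) - 1 = (k:ℝ) := by push_cast; ring
    rw [e3]
    have hrp : 0 ≤ v ^ ((1:ℝ) / (k:ℝ)) := le_of_lt (Real.rpow_pos_of_pos hv _)
    have e4 : ((k + 1 : ℕ) : ℝ) = (k:ℝ) + 1 := by push_cast; ring
    rw [e4]
    nlinarith [hrp]

end Boyd

/-- Lemma `boyd` of the paper: for monic polynomials `P` with exactly `k ≥ 2` nonzero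
coefficients, the measure of `{y ∈ [0,1] : |P(e^{2πiy})| ≤ v}` is at most
`c_k v^{1/(k-1)}`, with `c_k` depending only on `k`. -/
theorem poly_sublevel_bound :
    ∃ c : ℕ → ℝ, ∀ k : ℕ, 2 ≤ k → 0 < c k ∧
      ∀ P : Polynomial ℂ, P.Monic → P.support.card = k → ∀ v : ℝ, 0 < v →
        volume {y : ℝ | y ∈ Set.Icc (0:ℝ) 1 ∧
            ‖P.eval (Complex.exp (2 * Real.pi * Complex.I * y))‖ ≤ v} ≤
          ENNReal.ofReal (c k * v ^ ((1:ℝ) / ((k : ℝ) - 1))) := by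
  refine ⟨fun k => 5 * k, fun k hk => ⟨?_, ?_⟩⟩
  · have h2 : (2:ℝ) ≤ (k:ℝ) := by exact_mod_cast hk
    show (0:ℝ) < 5 * (k:ℝ)
    nlinarith
  · intro P hM hcard v hv
    exact Boyd.main k hk P hM hcard v hv
end

section
/- Let $\lambda$ be a PV number of degree $n$ with companion matrix $C$ acting as an endomorphism of $\mathbb{T}^n=\mathbb{R}^n/\mathbb{Z}^n$, let $v=[1,\lambda,\dots,\lambda^{n-1}]^T$, and let $q\in\mathbb{Q}^n$. Write $\alpha_1$ for the first entry of $V^T(VV^T)^{-1}q$ (where $V$ is the Vandermonde matrix of the conjugates). Then $\|C^k q-\alpha_1\lambda^k v\|\to 0$ exponentially fast in $\mathbb{R}^n$, and hence $\|C^k p_n(q)-p_n(\alpha_1\lambda^k v)\|_{\mathbb{T}^n}\to 0$ exponentially fast, where $p_n:\mathbb{R}^n\to\mathbb{T}^n$ is the projection and $\|\cdot\|_{\mathbb{T}^n}$ is the quotient metric. -/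
open Polynomial Matrix

/-- Rational vectors contract exponentially to the `λ`-eigendirection under the
companion matrix of a PV number: `‖Cᵏq - α₁λᵏv‖ → 0` exponentially fast (entrywise),
and hence the same holds modulo `ℤⁿ` (i.e. for the images in the torus `𝕋ⁿ`). -/
theorem companion_contracts_to_eigendirection (n : ℕ) [NeZero n]
    (lam : ℝ) (hlam : 1 < lam) (lams : Fin n → ℂ) (hl0 : lams 0 = lam)
    (Λ : Polynomial ℤ) (hmonic : Λ.Monic) (hdeg : Λ.natDegree = n) (hirr : Irreducible Λ)
    (hsplit : Λ.map (Int.castRingHom ℂ) = ∏ j, (Polynomial.X - Polynomial.C (lams j)))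
    (hsmall : ∀ j, j ≠ 0 → ‖lams j‖ < 1)
    (Cmat V : Matrix (Fin n) (Fin n) ℂ)
    (hC : Cmat = Matrix.of fun (i j : Fin n) =>
      if (j : ℕ) = (i : ℕ) + 1 then 1
      else if (i : ℕ) = n - 1 then -((Λ.coeff (j : ℕ) : ℂ)) else 0)
    (hV : V = Matrix.of fun (i j : Fin n) => lams j ^ (i : ℕ))
    (q : Fin n → ℚ) (qC : Fin n → ℂ) (hq : ∀ i, qC i = (q i : ℂ))
    (α₁ : ℂ) (hα : α₁ = ((V.transpose * (V * V.transpose)⁻¹) *ᵥ qC) 0) :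
    ∃ C0 > (0:ℝ), ∃ θ ∈ Set.Ioo (0:ℝ) 1,
      (∀ k : ℕ, ∀ i : Fin n,
        ‖((Cmat ^ k) *ᵥ qC) i - α₁ * (lam : ℂ) ^ k * lams 0 ^ (i : ℕ)‖ ≤
          C0 * θ ^ k) ∧
      (∀ k : ℕ, ∃ z : Fin n → ℤ, ∀ i : Fin n,
        ‖((Cmat ^ k) *ᵥ qC) i - α₁ * (lam : ℂ) ^ k * lams 0 ^ (i : ℕ) - (z i : ℂ)‖ ≤
          C0 * θ ^ k) := by
  have hn : 0 < n := Nat.pos_of_ne_zero (NeZero.ne n)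
  -- lams is injective
  have hinj : Function.Injective lams := by
    have hprim : Λ.IsPrimitive := hmonic.isPrimitive
    have hirrQ : Irreducible (Λ.map (Int.castRingHom ℚ)) :=
      (Polynomial.IsPrimitive.Int.irreducible_iff_irreducible_map_cast hprim).mp hirr
    have hsep : (Λ.map (Int.castRingHom ℚ)).Separable := hirrQ.separable
    have hsepC : (Λ.map (Int.castRingHom ℂ)).Separable := by
      have hmm : Λ.map (Int.castRingHom ℂ)
          = (Λ.map (Int.castRingHom ℚ)).map (algebraMap ℚ ℂ) := by
        rw [Polynomial.map_map]
        congr 1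
      rw [hmm]
      exact hsep.map
    have hroots : (Λ.map (Int.castRingHom ℂ)).roots = Finset.univ.val.map lams := by
      rw [hsplit]
      have h2 : (∏ j, (X - C (lams j)))
          = ((Finset.univ.val.map lams).map fun a => X - C a).prod := by
        rw [Multiset.map_map]
        rfl
      rw [h2, Polynomial.roots_multiset_prod_X_sub_C]
    have hnd : (Finset.univ.val.map lams).Nodup := hroots ▸ Polynomial.nodup_roots hsepC
    intro a b hab
    exact Multiset.inj_on_of_nodup_map hnd a (Finset.mem_univ_val a)
      b (Finset.mem_univ_val b) hab
  -- V is invertible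
  have hVdet : V.det ≠ 0 := by
    have hVt : V = (Matrix.vandermonde lams)ᵀ := by
      rw [hV]; ext i j; simp [Matrix.vandermonde]
    rw [hVt, Matrix.det_transpose]
    exact Matrix.det_vandermonde_ne_zero_iff.mpr hinj
  have hVu : IsUnit V.det := isUnit_iff_ne_zero.mpr hVdet
  -- every root satisfies lams j ^ n = - ∑ m < n, coeff m * lams j ^ m
  have hrootpow : ∀ j : Fin n, lams j ^ n = -∑ m ∈ Finset.range n, (Λ.coeff m : ℂ) * lams j ^ m := by
    intro j
    have hev : (Λ.map (Int.castRingHom ℂ)).eval (lams j) = 0 := by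
      rw [hsplit, Polynomial.eval_prod]
      exact Finset.prod_eq_zero (Finset.mem_univ j) (by simp)
    have hndeg : (Λ.map (Int.castRingHom ℂ)).natDegree = n := by
      rw [Polynomial.natDegree_map_eq_of_injective Int.cast_injective, hdeg]
    have hsum := Polynomial.eval_eq_sum_range (p := Λ.map (Int.castRingHom ℂ)) (x := lams j)
    rw [hndeg, Finset.sum_range_succ] at hsum
    have hcn : (Λ.map (Int.castRingHom ℂ)).coeff n = 1 := by
      have := hmonic
      rw [Polynomial.coeff_map]
      rw [show n = Λ.natDegree from hdeg.symm]
      simp [hmonic.coeff_natDegree]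
    rw [hcn, hev] at hsum
    have : ∀ m ∈ Finset.range n, (Λ.map (Int.castRingHom ℂ)).coeff m * lams j ^ m
        = (Λ.coeff m : ℂ) * lams j ^ m := by
      intro m _; rw [Polynomial.coeff_map]; norm_num
    rw [Finset.sum_congr rfl this] at hsum
    linear_combination -hsum
  -- C * V = V * diagonal lams
  have hCV : Cmat * V = V * Matrix.diagonal lams := by
    ext i j
    rw [Matrix.mul_apply, Matrix.mul_diagonal, hC, hV]
    by_cases hi : (i : ℕ) = n - 1
    · have hnone : ∀ m : Fin n, ¬ ((m : ℕ) = (i : ℕ) + 1) := by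
        intro m hm
        have : (i : ℕ) + 1 = n := by omega
        omega
      have : ∀ m : Fin n,
          (Matrix.of fun (i j : Fin n) =>
            if (j : ℕ) = (i : ℕ) + 1 then (1:ℂ)
            else if (i : ℕ) = n - 1 then -((Λ.coeff (j : ℕ) : ℂ)) else 0) i m
            * (Matrix.of fun (i j : Fin n) => lams j ^ (i : ℕ)) m j
          = -((Λ.coeff (m : ℕ) : ℂ)) * lams j ^ (m : ℕ) := by
        intro m
        simp only [Matrix.of_apply]
        rw [if_neg (hnone m), if_pos hi]
      rw [Finset.sum_congr rfl fun m _ => this m]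
      have hsr : ∑ m : Fin n, -((Λ.coeff (m : ℕ) : ℂ)) * lams j ^ (m : ℕ)
          = -∑ m ∈ Finset.range n, (Λ.coeff m : ℂ) * lams j ^ m := by
        rw [← Finset.sum_neg_distrib]
        rw [Finset.sum_range fun m => -((Λ.coeff m : ℂ) * lams j ^ m)]
        simp
      rw [hsr, ← hrootpow j]
      rw [Matrix.of_apply, hi]
      rw [show lams j ^ (n-1) * lams j = lams j ^ n by
        rw [← pow_succ]; congr 1; omega]
    · have hlt : (i : ℕ) + 1 < n := by
        have := i.isLt; omega
      have : ∑ m : Fin n,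
          (Matrix.of fun (i j : Fin n) =>
            if (j : ℕ) = (i : ℕ) + 1 then (1:ℂ)
            else if (i : ℕ) = n - 1 then -((Λ.coeff (j : ℕ) : ℂ)) else 0) i m
            * (Matrix.of fun (i j : Fin n) => lams j ^ (i : ℕ)) m j
          = ∑ m : Fin n, (if m = ⟨(i:ℕ)+1, hlt⟩ then (1:ℂ) else 0) * lams j ^ (m : ℕ) := by
        refine Finset.sum_congr rfl fun m _ => ?_
        have : ((m : ℕ) = (i : ℕ) + 1) ↔ (m = ⟨(i:ℕ)+1, hlt⟩) := by
          rw [Fin.ext_iff]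
        simp only [Matrix.of_apply, hi, if_false]
        by_cases hm : (m : ℕ) = (i : ℕ) + 1
        · rw [if_pos hm, if_pos (this.mp hm)]
        · rw [if_neg hm, if_neg (fun h => hm (this.mpr h))]
      rw [this]
      rw [Finset.sum_eq_single (⟨(i:ℕ)+1, hlt⟩ : Fin n)]
      · simp [pow_succ]
      · intro b _ hb; rw [if_neg hb, zero_mul]
      · intro h; exact absurd (Finset.mem_univ _) h
  -- C^k * V = V * diagonal (lams ^ k)
  have hCkV : ∀ k : ℕ, Cmat ^ k * V = V * Matrix.diagonal (fun j => lams j ^ k) := by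
    intro k
    induction k with
    | zero => simp
    | succ k ih =>
      rw [pow_succ, Matrix.mul_assoc, hCV, ← Matrix.mul_assoc, ih, Matrix.mul_assoc,
        Matrix.diagonal_mul_diagonal]
      simp [pow_succ]
  -- Γ
  set Γ : Fin n → ℂ := V⁻¹ *ᵥ qC with hΓ
  have hqV : V *ᵥ Γ = qC := by
    rw [hΓ, Matrix.mulVec_mulVec, Matrix.mul_nonsing_inv _ hVu, Matrix.one_mulVec]
  have hα₁ : α₁ = Γ 0 := by
    have h1 : (V * V.transpose)⁻¹ = V.transpose⁻¹ * V⁻¹ := Matrix.mul_inv_rev _ _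
    have h2 : V.transpose * (V * V.transpose)⁻¹ = V⁻¹ := by
      rw [h1, ← Matrix.mul_assoc, Matrix.mul_nonsing_inv, Matrix.one_mul]
      rwa [Matrix.det_transpose]
    rw [hα, h2]
  -- entrywise formula
  have hentry : ∀ k : ℕ, ∀ i : Fin n,
      ((Cmat ^ k) *ᵥ qC) i = ∑ j : Fin n, lams j ^ (i : ℕ) * lams j ^ k * Γ j := by
    intro k i
    rw [← hqV, Matrix.mulVec_mulVec, hCkV k, ← Matrix.mulVec_mulVec]
    rw [Matrix.mulVec, dotProduct]
    refine Finset.sum_congr rfl fun j _ => ?_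
    rw [Matrix.mulVec_diagonal, hV]
    simp [Matrix.of_apply, mul_assoc]
  -- the contraction rate
  set θ : ℝ := Finset.univ.sup' (Finset.univ_nonempty (α := Fin n))
    (fun j => if j = 0 then (1/2 : ℝ) else ‖lams j‖) with hθ
  have hθ1 : θ < 1 := by
    rw [hθ, Finset.sup'_lt_iff]
    intro j _
    by_cases hj : j = 0
    · rw [if_pos hj]; norm_num
    · rw [if_neg hj]; exact hsmall j hj
  have hθ0 : (1/2 : ℝ) ≤ θ := by
    rw [hθ]
    have := Finset.le_sup' (f := fun j => if j = 0 then (1/2 : ℝ) else ‖lams j‖)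
      (Finset.mem_univ (0 : Fin n))
    refine le_trans (le_of_eq ?_) this
    simp
  have hθmem : θ ∈ Set.Ioo (0:ℝ) 1 := ⟨by linarith, hθ1⟩
  have hθj : ∀ j : Fin n, j ≠ 0 → ‖lams j‖ ≤ θ := by
    intro j hj
    rw [hθ]
    have := Finset.le_sup' (f := fun j => if j = 0 then (1/2 : ℝ) else ‖lams j‖)
      (Finset.mem_univ j)
    rwa [if_neg hj] at this
  -- the constant
  set C0 : ℝ := (∑ j : Fin n, ‖Γ j‖) + 1 with hC0
  have hC0pos : 0 < C0 := by
    rw [hC0]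
    have : 0 ≤ ∑ j : Fin n, ‖Γ j‖ :=
      Finset.sum_nonneg fun j _ => norm_nonneg _
    linarith
  -- main bound
  have hmain : ∀ k : ℕ, ∀ i : Fin n,
      ‖((Cmat ^ k) *ᵥ qC) i - α₁ * (lam : ℂ) ^ k * lams 0 ^ (i : ℕ)‖ ≤ C0 * θ ^ k := by
    intro k i
    have hsplit0 : ((Cmat ^ k) *ᵥ qC) i - α₁ * (lam : ℂ) ^ k * lams 0 ^ (i : ℕ)
        = ∑ j ∈ Finset.univ.erase 0, lams j ^ (i : ℕ) * lams j ^ k * Γ j := by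
      rw [hentry k i, hα₁, ← hl0]
      rw [← Finset.add_sum_erase _ _ (Finset.mem_univ (0 : Fin n))]
      ring
    rw [hsplit0]
    calc ‖∑ j ∈ Finset.univ.erase 0, lams j ^ (i : ℕ) * lams j ^ k * Γ j‖
        ≤ ∑ j ∈ Finset.univ.erase 0, ‖lams j ^ (i : ℕ) * lams j ^ k * Γ j‖ :=
          norm_sum_le _ _
      _ ≤ ∑ j ∈ Finset.univ.erase 0, ‖Γ j‖ * θ ^ k := by
          refine Finset.sum_le_sum fun j hj => ?_
          have hj0 : j ≠ 0 := Finset.ne_of_mem_erase hj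
          simp only [norm_mul, norm_pow]
          have h1 : ‖lams j‖ ^ (i : ℕ) ≤ 1 :=
            pow_le_one₀ (norm_nonneg _) (le_of_lt (hsmall j hj0))
          have h2 : ‖lams j‖ ^ k ≤ θ ^ k :=
            pow_le_pow_left₀ (norm_nonneg _) (hθj j hj0) k
          calc ‖lams j‖ ^ (i:ℕ) * ‖lams j‖ ^ k * ‖Γ j‖
              ≤ 1 * (θ ^ k) * ‖Γ j‖ := by
                refine mul_le_mul_of_nonneg_right ?_ (norm_nonneg _)
                exact mul_le_mul h1 h2 (by positivity) (by norm_num)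
            _ = ‖Γ j‖ * θ ^ k := by ring
      _ ≤ ∑ j : Fin n, ‖Γ j‖ * θ ^ k := by
          refine Finset.sum_le_sum_of_subset_of_nonneg (Finset.erase_subset _ _) ?_
          intro j _ _
          positivity
      _ = (∑ j : Fin n, ‖Γ j‖) * θ ^ k := by rw [← Finset.sum_mul]
      _ ≤ C0 * θ ^ k := by
          refine mul_le_mul_of_nonneg_right ?_ (by positivity)
          rw [hC0]; linarith
  refine ⟨C0, hC0pos, θ, hθmem, hmain, fun k => ⟨0, fun i => ?_⟩⟩
  simpa using hmain k i
end
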